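/- arXiv:2211.11452 — 5 statements merged into one kernel-verified Lean document; each statement's English description precedes it below -/
import Mathlib

section
/- Let N ≥ 3, 1 < p < N, and let a₁, a₂ ∈ ℝ^N with a₁ ≠ a₂, a := (a₁+a₂)/2. Then the potential V := μ₁V₁ + μ₂V₂ satisfies V(x) ≥ 0 for every x ∈ ℝ^N \ {a₁, a₂, a}. -/
open MeasureTheory

noncomputable section

/-- Midpoint of `a₁` and `a₂`. -/
def midpt {N : ℕ} (a₁ a₂ : EuclideanSpace ℝ (Fin N)) : EuclideanSpace ℝ (Fin N) :=
  (2⁻¹ : ℝ) • (a₁ + a₂)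

/-- The bipolar potential `V₁`. -/
def V₁ {N : ℕ} (p : ℝ) (a₁ a₂ x : EuclideanSpace ℝ (Fin N)) : ℝ :=
  ‖a₁ - a₂‖ ^ 2 * ‖x - midpt a₁ a₂‖ ^ (p - 2) / (‖x - a₁‖ ^ p * ‖x - a₂‖ ^ p)

/-- The bipolar potential `V₂`. -/
def V₂ {N : ℕ} (p : ℝ) (a₁ a₂ x : EuclideanSpace ℝ (Fin N)) : ℝ :=
  ‖x - midpt a₁ a₂‖ ^ (p - 4) / (‖x - a₁‖ ^ p * ‖x - a₂‖ ^ p) *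
    (‖x - a₁‖ ^ 2 * ‖x - a₂‖ ^ 2 - (inner ℝ (x - a₁) (x - a₂) : ℝ) ^ 2)

/-- The constant `μ₁`. -/
def μ₁ (N : ℕ) (p : ℝ) : ℝ := (p - 1) / 4 * ((N - p) / (p - 1)) ^ p

/-- The constant `μ₂`. -/
def μ₂ (N : ℕ) (p : ℝ) : ℝ := (p - 2) / 2 * ((N - p) / (p - 1)) ^ (p - 1)

/-- The full potential `V = μ₁ V₁ + μ₂ V₂`. -/
def Vfull {N : ℕ} (p : ℝ) (a₁ a₂ x : EuclideanSpace ℝ (Fin N)) : ℝ :=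
  μ₁ N p * V₁ p a₁ a₂ x + μ₂ N p * V₂ p a₁ a₂ x

end

lemma key_ineq {N : ℕ} (u v : EuclideanSpace ℝ (Fin N)) :
    ‖u‖ ^ 2 * ‖v‖ ^ 2 - (inner ℝ u v : ℝ) ^ 2 ≤ ‖u - v‖ ^ 2 * ‖u + v‖ ^ 2 / 4 := by
  have h1 := norm_sub_sq_real u v
  have h2 := norm_add_sq_real u v
  nlinarith [sq_nonneg (‖u‖ ^ 2 - ‖v‖ ^ 2)]

lemma cs_ineq {N : ℕ} (u v : EuclideanSpace ℝ (Fin N)) :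
    0 ≤ ‖u‖ ^ 2 * ‖v‖ ^ 2 - (inner ℝ u v : ℝ) ^ 2 := by
  have h := abs_real_inner_le_norm u v
  have h2 := abs_nonneg (inner ℝ u v : ℝ)
  nlinarith [sq_abs (inner ℝ u v : ℝ)]

/-- For `N ≥ 3`, `1 < p < N` and distinct poles `a₁ ≠ a₂`, the potential
`V = μ₁ V₁ + μ₂ V₂` is nonnegative on `ℝ^N \ {a₁, a₂, a}` where `a` is the midpoint. -/
theorem bipolar_potential_nonneg (N : ℕ) (hN : 3 ≤ N) (p : ℝ) (hp : 1 < p) (hpN : p < N)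
    (a₁ a₂ : EuclideanSpace ℝ (Fin N)) (hne : a₁ ≠ a₂)
    (x : EuclideanSpace ℝ (Fin N)) (hx₁ : x ≠ a₁) (hx₂ : x ≠ a₂) (hxa : x ≠ midpt a₁ a₂) :
    0 ≤ Vfull p a₁ a₂ x := by
  set u := x - a₁ with hu_def
  set v := x - a₂ with hv_def
  have hu : (0:ℝ) < ‖u‖ := norm_pos_iff.mpr (sub_ne_zero.mpr hx₁)
  have hv : (0:ℝ) < ‖v‖ := norm_pos_iff.mpr (sub_ne_zero.mpr hx₂)
  have hM : (0:ℝ) < ‖x - midpt a₁ a₂‖ := norm_pos_iff.mpr (sub_ne_zero.mpr hxa)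
  set M := ‖x - midpt a₁ a₂‖ with hM_def
  set B := ‖u‖ ^ 2 * ‖v‖ ^ 2 - (inner ℝ u v : ℝ) ^ 2 with hB_def
  have hN3 : (3:ℝ) ≤ (N:ℝ) := by exact_mod_cast hN
  -- positivity of denominators
  have hD : (0:ℝ) < ‖u‖ ^ p * ‖v‖ ^ p :=
    mul_pos (Real.rpow_pos_of_pos hu p) (Real.rpow_pos_of_pos hv p)
  -- t and μ facts
  set t := ((N:ℝ) - p) / (p - 1) with ht_def
  have hp1 : (0:ℝ) < p - 1 := by linarith
  have ht : (0:ℝ) < t := div_pos (by linarith) hp1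
  have htp1 : (0:ℝ) < t ^ (p - 1) := Real.rpow_pos_of_pos ht _
  have htsplit : t ^ p = t ^ (p - 1) * t := by
    have h : t ^ ((p - 1) + 1) = t ^ (p - 1) * t := by
      rw [Real.rpow_add ht, Real.rpow_one]
    rw [← h]; congr 1; ring
  have htval : t * (p - 1) = (N:ℝ) - p := by
    rw [ht_def, div_mul_cancel₀ _ hp1.ne']
  have hμ₁ : 0 ≤ μ₁ N p := by
    have : (0:ℝ) < t ^ p := Real.rpow_pos_of_pos ht _
    unfold μ₁
    rw [← ht_def]
    positivity
  have hμsum : 0 ≤ μ₁ N p + μ₂ N p := by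
    unfold μ₁ μ₂
    rw [← ht_def, htsplit]
    have : (p - 1) / 4 * (t ^ (p - 1) * t) + (p - 2) / 2 * t ^ (p - 1)
        = t ^ (p - 1) * ((t * (p - 1)) / 4 + (p - 2) / 2) := by ring
    rw [this, htval]
    have : (0:ℝ) ≤ ((N:ℝ) - p) / 4 + (p - 2) / 2 := by linarith
    positivity
  -- geometric facts
  have hmid : x - midpt a₁ a₂ = (2⁻¹ : ℝ) • (u + v) := by
    simp only [hu_def, hv_def, midpt]
    module
  have hMval : M = 2⁻¹ * ‖u + v‖ := by
    rw [hM_def, hmid, norm_smul]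
    norm_num
  have hdval : ‖a₁ - a₂‖ = ‖u - v‖ := by
    rw [show a₁ - a₂ = -(u - v) by simp only [hu_def, hv_def]; module, norm_neg]
  have hBnn : 0 ≤ B := cs_ineq u v
  have hdMB : B ≤ ‖a₁ - a₂‖ ^ 2 * M ^ 2 := by
    rw [hdval, hMval]
    have := key_ineq u v
    nlinarith
  -- rewrite Vfull
  have hMsplit : M ^ (p - 2) = M ^ (p - 4) * M ^ (2:ℕ) := by
    rw [show p - 2 = (p - 4) + ((2:ℕ):ℝ) by push_cast; ring, Real.rpow_add hM,
      Real.rpow_natCast]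
  have hrw : Vfull p a₁ a₂ x
      = (M ^ (p - 4) / (‖u‖ ^ p * ‖v‖ ^ p)) *
        (μ₁ N p * (‖a₁ - a₂‖ ^ 2 * M ^ 2) + μ₂ N p * B) := by
    unfold Vfull V₁ V₂
    rw [← hu_def, ← hv_def, ← hM_def, ← hB_def, hMsplit]
    ring
  rw [hrw]
  have hfac : (0:ℝ) ≤ M ^ (p - 4) / (‖u‖ ^ p * ‖v‖ ^ p) :=
    div_nonneg (Real.rpow_pos_of_pos hM _).le hD.le
  have hinner : 0 ≤ μ₁ N p * (‖a₁ - a₂‖ ^ 2 * M ^ 2) + μ₂ N p * B := by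
    have heq : μ₁ N p * (‖a₁ - a₂‖ ^ 2 * M ^ 2) + μ₂ N p * B
        = μ₁ N p * (‖a₁ - a₂‖ ^ 2 * M ^ 2 - B) + (μ₁ N p + μ₂ N p) * B := by ring
    rw [heq]
    exact add_nonneg (mul_nonneg hμ₁ (by linarith)) (mul_nonneg hμsum hBnn)
  exact mul_nonneg hfac hinner
end

section
/- Let N ≥ 3, 1 < p < N, and let a₁, a₂ ∈ ℝ^N be distinct points with midpoint a = (a₁+a₂)/2. Let β = (p−N)/(2(p−1)) and φ(x) = |x−a₁|^β·|x−a₂|^β. Then for every x ∈ ℝ^N \ {a₁, a₂, a} one has the pointwise identity −div(|∇φ|^{p−2}∇φ)(x) = V(x) · φ(x)^{p−1}, where V = μ₁V₁ + μ₂V₂. -/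
open MeasureTheory

/-- Divergence of a vector field on Euclidean space. -/
noncomputable def divg {N : ℕ} (X : EuclideanSpace ℝ (Fin N) → EuclideanSpace ℝ (Fin N))
    (x : EuclideanSpace ℝ (Fin N)) : ℝ :=
  ∑ i, fderiv ℝ X x (EuclideanSpace.single i 1) i

/-- The `p`-Laplacian `Δ_p φ = div(|∇φ|^{p-2} ∇φ)`. -/
noncomputable def pLap {N : ℕ} (p : ℝ) (φ : EuclideanSpace ℝ (Fin N) → ℝ)
    (x : EuclideanSpace ℝ (Fin N)) : ℝ :=
  divg (fun y => ‖gradient φ y‖ ^ (p - 2) • gradient φ y) x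

section Helpers

open scoped RealInnerProductSpace

lemma hasFDerivAt_norm_sub_rpow {E : Type*} [NormedAddCommGroup E] [InnerProductSpace ℝ E]
    (b : E) (r : ℝ) {x : E} (hx : x ≠ b) :
    HasFDerivAt (fun y => ‖y - b‖ ^ r) ((r * ‖x - b‖ ^ (r - 2)) • (innerSL ℝ (x - b))) x := by
  have hxb : x - b ≠ 0 := sub_ne_zero.2 hx
  have h1 : HasFDerivAt (fun y : E => y - b) (ContinuousLinearMap.id ℝ E) x :=
    (hasFDerivAt_id x).sub_const b
  have hn : HasFDerivAt (fun y : E => (⟪y - b, y - b⟫ : ℝ))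
      ((2 : ℝ) • innerSL ℝ (x - b)) x := by
    have h := (h1.inner ℝ h1)
    refine h.congr_fderiv ?_
    ext h'
    simp only [ContinuousLinearMap.smul_apply, innerSL_apply_apply, ContinuousLinearMap.comp_apply,
      ContinuousLinearMap.prod_apply, ContinuousLinearMap.id_apply, fderivInnerCLM_apply,
      smul_eq_mul]
    rw [real_inner_comm]
    ring
  have hpos : (⟪x - b, x - b⟫ : ℝ) ≠ 0 := by
    simpa [real_inner_self_eq_norm_sq] using pow_ne_zero 2 (norm_ne_zero_iff.2 hxb)
  have h2 := hn.rpow_const (p := r / 2) (Or.inl hpos)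
  have hkey : (fun y : E => (⟪y - b, y - b⟫ : ℝ) ^ (r / 2)) = fun y => ‖y - b‖ ^ r := by
    funext y
    rw [real_inner_self_eq_norm_sq, ← Real.rpow_natCast (‖y - b‖) 2,
      ← Real.rpow_mul (norm_nonneg _)]
    congr 1
    push_cast
    ring
  rw [hkey] at h2
  convert h2 using 1
  rw [smul_smul]
  congr 1
  rw [real_inner_self_eq_norm_sq, ← Real.rpow_natCast (‖x - b‖) 2,
    ← Real.rpow_mul (norm_nonneg _)]
  rw [show ((2:ℕ):ℝ) * (r / 2 - 1) = r - 2 by push_cast; ring]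
  ring

lemma clm_apply_sum {N : ℕ} (L : EuclideanSpace ℝ (Fin N) →L[ℝ] ℝ)
    (w : EuclideanSpace ℝ (Fin N)) :
    ∑ i, L (EuclideanSpace.single i 1) * w i = L w := by
  have hw : ∑ i, w i • (EuclideanSpace.single i (1:ℝ) : EuclideanSpace ℝ (Fin N)) = w := by
    simpa [EuclideanSpace.basisFun_apply, EuclideanSpace.basisFun_repr] using
      (EuclideanSpace.basisFun (Fin N) ℝ).sum_repr w
  conv_rhs => rw [← hw]
  rw [map_sum]
  simp [mul_comm]

lemma sum_single_self (N : ℕ) :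
    ∑ i, (EuclideanSpace.single i (1:ℝ) : EuclideanSpace ℝ (Fin N)) i = (N : ℝ) := by
  simp [EuclideanSpace.single_apply]

lemma divg_add_smul {N : ℕ} (c₁ c₂ : ℝ) (L₁ L₂ : EuclideanSpace ℝ (Fin N) →L[ℝ] ℝ)
    (w₁ w₂ : EuclideanSpace ℝ (Fin N)) (X : EuclideanSpace ℝ (Fin N) → EuclideanSpace ℝ (Fin N))
    (x : EuclideanSpace ℝ (Fin N))
    (hX : HasFDerivAt X ((c₁ • ContinuousLinearMap.id ℝ (EuclideanSpace ℝ (Fin N))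
        + L₁.smulRight w₁)
      + (c₂ • ContinuousLinearMap.id ℝ (EuclideanSpace ℝ (Fin N)) + L₂.smulRight w₂)) x) :
    divg X x = (N : ℝ) * c₁ + (N : ℝ) * c₂ + L₁ w₁ + L₂ w₂ := by
  simp only [divg]
  rw [hX.fderiv]
  have h : ∀ i, ((c₁ • ContinuousLinearMap.id ℝ (EuclideanSpace ℝ (Fin N)) + L₁.smulRight w₁
      + (c₂ • ContinuousLinearMap.id ℝ (EuclideanSpace ℝ (Fin N)) + L₂.smulRight w₂))
        (EuclideanSpace.single i 1)) i
      = c₁ * (EuclideanSpace.single i (1:ℝ) : EuclideanSpace ℝ (Fin N)) i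
        + L₁ (EuclideanSpace.single i 1) * w₁ i
        + (c₂ * (EuclideanSpace.single i (1:ℝ) : EuclideanSpace ℝ (Fin N)) i
        + L₂ (EuclideanSpace.single i 1) * w₂ i) := by
    intro i
    simp [PiLp.add_apply, PiLp.smul_apply, smul_eq_mul]
  simp only [h]
  rw [Finset.sum_add_distrib, Finset.sum_add_distrib, Finset.sum_add_distrib]
  rw [← Finset.mul_sum, ← Finset.mul_sum, sum_single_self, clm_apply_sum, clm_apply_sum]
  ring

end Helpers

section MainProof

open scoped RealInnerProductSpace

set_option maxHeartbeats 8000000 in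
/-- the function `φ(x) = |x-a₁|^β |x-a₂|^β`, `β = (p-N)/(2(p-1))`, satisfies
the pointwise identity `-Δ_p φ = V φ^{p-1}` on `ℝ^N \ {a₁, a₂, a}`, with `V = μ₁V₁ + μ₂V₂`. -/
theorem pLaplacian_pointwise_identity (N : ℕ) (hN : 3 ≤ N) (p : ℝ) (hp : 1 < p)
    (hpN : p < N) (a₁ a₂ : EuclideanSpace ℝ (Fin N)) (hne : a₁ ≠ a₂)
    (β : ℝ) (hβ : β = (p - N) / (2 * (p - 1)))
    (φ : EuclideanSpace ℝ (Fin N) → ℝ)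
    (hφ : φ = fun x => ‖x - a₁‖ ^ β * ‖x - a₂‖ ^ β)
    (x : EuclideanSpace ℝ (Fin N)) (hx₁ : x ≠ a₁) (hx₂ : x ≠ a₂) (hxa : x ≠ midpt a₁ a₂) :
    -pLap p φ x = Vfull p a₁ a₂ x * φ x ^ (p - 1) := by
  subst hφ
  simp only [Vfull, V₁, V₂, μ₁, μ₂]
  set a := midpt a₁ a₂ with ha
  have hp1 : (0:ℝ) < p - 1 := by linarith
  have hNp : (0:ℝ) < (N:ℝ) - p := by linarith
  have hβneg : β < 0 := by
    rw [hβ]; apply div_neg_of_neg_of_pos <;> linarith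
  have hc0 : (0:ℝ) < ((N:ℝ) - p)/(p-1) := div_pos hNp hp1
  have hcβ : ((N:ℝ) - p)/(p-1) = -(2*β) := by
    rw [hβ]; field_simp; ring
  have hu : 0 < ‖x - a₁‖ := norm_pos_iff.mpr (sub_ne_zero.mpr hx₁)
  have hv : 0 < ‖x - a₂‖ := norm_pos_iff.mpr (sub_ne_zero.mpr hx₂)
  have hm : 0 < ‖x - a‖ := norm_pos_iff.mpr (sub_ne_zero.mpr hxa)
  set c : ℝ := ((N:ℝ) - p)/(p-1) with hcdef
  set s : ℝ := β*(p-1) - p with hs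
  set t : ℝ := β*(p-1) + 2 - p with ht
  set K : ℝ := c^(p-2) * β with hK
  -- gradient formula
  have hgrad : ∀ y, y ≠ a₁ → y ≠ a₂ →
      HasGradientAt (fun x => ‖x - a₁‖ ^ β * ‖x - a₂‖ ^ β)
      ((β * ‖y - a₁‖^(β-2) * ‖y - a₂‖^β) • (y - a₁)
        + (β * ‖y - a₁‖^β * ‖y - a₂‖^(β-2)) • (y - a₂)) y := by
    intro y hy1 hy2
    have h₁ := hasFDerivAt_norm_sub_rpow a₁ β hy1
    have h₂ := hasFDerivAt_norm_sub_rpow a₂ β hy2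
    have h₃ := h₁.mul h₂
    rw [hasGradientAt_iff_hasFDerivAt]
    refine h₃.congr_fderiv ?_
    ext z
    simp only [InnerProductSpace.toDual_apply_apply, inner_add_left, real_inner_smul_left,
      ContinuousLinearMap.add_apply, ContinuousLinearMap.smul_apply, innerSL_apply_apply, smul_eq_mul]
    ring
  -- norm of the gradient
  have hmidpt : ∀ y : EuclideanSpace ℝ (Fin N),
      y - a = (2⁻¹:ℝ) • ((y - a₁) + (y - a₂)) := by
    intro y
    rw [ha]
    simp only [midpt]
    module
  have hm2 : ∀ y : EuclideanSpace ℝ (Fin N),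
      ‖y - a‖^2 = (‖y-a₁‖^2 + 2*⟪y-a₁, y-a₂⟫ + ‖y-a₂‖^2)/4 := by
    intro y
    rw [hmidpt y, norm_smul, mul_pow, ← norm_add_sq_real]
    simp only [norm_inv, Real.norm_ofNat]
    ring
  have hnorm : ∀ y, y ≠ a₁ → y ≠ a₂ →
      ‖(β * ‖y - a₁‖^(β-2) * ‖y - a₂‖^β) • (y - a₁)
        + (β * ‖y - a₁‖^β * ‖y - a₂‖^(β-2)) • (y - a₂)‖
      = c * (‖y - a₁‖^(β-1) * ‖y - a₂‖^(β-1) * ‖y - a‖) := by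
    intro y hy1 hy2
    have hyu : 0 < ‖y - a₁‖ := norm_pos_iff.mpr (sub_ne_zero.mpr hy1)
    have hyv : 0 < ‖y - a₂‖ := norm_pos_iff.mpr (sub_ne_zero.mpr hy2)
    have hb1 : ‖y - a₁‖^(β-2) = ‖y - a₁‖^(β-1) / ‖y - a₁‖ := by
      rw [show β-2 = β-1-1 by ring]; exact Real.rpow_sub_one (ne_of_gt hyu) _
    have hb2 : ‖y - a₁‖^β = ‖y - a₁‖^(β-1) * ‖y - a₁‖ := by
      conv_lhs => rw [show β = β-1+1 by ring]
      exact Real.rpow_add_one (ne_of_gt hyu) _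
    have hb3 : ‖y - a₂‖^(β-2) = ‖y - a₂‖^(β-1) / ‖y - a₂‖ := by
      rw [show β-2 = β-1-1 by ring]; exact Real.rpow_sub_one (ne_of_gt hyv) _
    have hb4 : ‖y - a₂‖^β = ‖y - a₂‖^(β-1) * ‖y - a₂‖ := by
      conv_lhs => rw [show β = β-1+1 by ring]
      exact Real.rpow_add_one (ne_of_gt hyv) _
    have hsq : ‖(β * ‖y - a₁‖^(β-2) * ‖y - a₂‖^β) • (y - a₁)
        + (β * ‖y - a₁‖^β * ‖y - a₂‖^(β-2)) • (y - a₂)‖^2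
        = (c * (‖y - a₁‖^(β-1) * ‖y - a₂‖^(β-1) * ‖y - a‖))^2 := by
      rw [norm_add_sq_real, norm_smul, norm_smul, real_inner_smul_left, real_inner_smul_right]
      simp only [Real.norm_eq_abs, mul_pow, sq_abs]
      rw [hb1, hb2, hb3, hb4, hcβ, hm2 y]
      set q1 : ℝ := ⟪y - a₁, y - a₂⟫ with hq1
      field_simp
      ring
    have hR : 0 ≤ c * (‖y - a₁‖^(β-1) * ‖y - a₂‖^(β-1) * ‖y - a‖) := by
      apply mul_nonneg hc0.le
      positivity
    calc ‖(β * ‖y - a₁‖^(β-2) * ‖y - a₂‖^β) • (y - a₁)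
        + (β * ‖y - a₁‖^β * ‖y - a₂‖^(β-2)) • (y - a₂)‖
        = Real.sqrt (‖(β * ‖y - a₁‖^(β-2) * ‖y - a₂‖^β) • (y - a₁)
          + (β * ‖y - a₁‖^β * ‖y - a₂‖^(β-2)) • (y - a₂)‖^2) :=
          (Real.sqrt_sq (norm_nonneg _)).symm
      _ = Real.sqrt ((c * (‖y - a₁‖^(β-1) * ‖y - a₂‖^(β-1) * ‖y - a‖))^2) := by rw [hsq]
      _ = c * (‖y - a₁‖^(β-1) * ‖y - a₂‖^(β-1) * ‖y - a‖) := Real.sqrt_sq hR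
  -- pointwise identity for the vector field
  have heq : ∀ y, y ≠ a₁ → y ≠ a₂ →
      ‖gradient (fun x => ‖x - a₁‖ ^ β * ‖x - a₂‖ ^ β) y‖^(p-2)
        • gradient (fun x => ‖x - a₁‖ ^ β * ‖x - a₂‖ ^ β) y
      = (K * ‖y - a‖^(p-2) * ‖y - a₁‖^s * ‖y - a₂‖^t) • (y - a₁)
        + (K * ‖y - a‖^(p-2) * ‖y - a₁‖^t * ‖y - a₂‖^s) • (y - a₂) := by
    intro y hy1 hy2
    have hyu : 0 < ‖y - a₁‖ := norm_pos_iff.mpr (sub_ne_zero.mpr hy1)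
    have hyv : 0 < ‖y - a₂‖ := norm_pos_iff.mpr (sub_ne_zero.mpr hy2)
    rw [(hgrad y hy1 hy2).gradient, hnorm y hy1 hy2]
    have h1 : (c * (‖y - a₁‖^(β-1) * ‖y - a₂‖^(β-1) * ‖y - a‖))^(p-2)
        = c^(p-2) * (‖y - a₁‖^((β-1)*(p-2)) * ‖y - a₂‖^((β-1)*(p-2)) * ‖y - a‖^(p-2)) := by
      rw [Real.mul_rpow hc0.le (by positivity),
        Real.mul_rpow (by positivity) (norm_nonneg _),
        Real.mul_rpow (by positivity) (by positivity),
        Real.rpow_mul (norm_nonneg _), Real.rpow_mul (norm_nonneg _)]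
    rw [h1, smul_add, smul_smul, smul_smul]
    have e1 : ‖y - a₁‖^((β-1)*(p-2)) * ‖y - a₁‖^(β-2) = ‖y - a₁‖^s := by
      rw [← Real.rpow_add hyu]; congr 1; rw [hs]; ring
    have e2 : ‖y - a₂‖^((β-1)*(p-2)) * ‖y - a₂‖^β = ‖y - a₂‖^t := by
      rw [← Real.rpow_add hyv]; congr 1; rw [ht]; ring
    have e3 : ‖y - a₁‖^((β-1)*(p-2)) * ‖y - a₁‖^β = ‖y - a₁‖^t := by
      rw [← Real.rpow_add hyu]; congr 1; rw [ht]; ring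
    have e4 : ‖y - a₂‖^((β-1)*(p-2)) * ‖y - a₂‖^(β-2) = ‖y - a₂‖^s := by
      rw [← Real.rpow_add hyv]; congr 1; rw [hs]; ring
    congr 1
    · congr 1
      rw [hK, ← e1, ← e2]; ring
    · congr 1
      rw [hK, ← e3, ← e4]; ring
  -- pass to the explicit vector field
  have hopen : IsOpen {y : EuclideanSpace ℝ (Fin N) | y ≠ a₁ ∧ y ≠ a₂} := by
    apply IsOpen.inter <;> exact isOpen_compl_singleton
  have hmem : {y : EuclideanSpace ℝ (Fin N) | y ≠ a₁ ∧ y ≠ a₂} ∈ nhds x :=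
    hopen.mem_nhds ⟨hx₁, hx₂⟩
  have hfe : fderiv ℝ (fun y => ‖gradient (fun x => ‖x - a₁‖ ^ β * ‖x - a₂‖ ^ β) y‖^(p-2)
        • gradient (fun x => ‖x - a₁‖ ^ β * ‖x - a₂‖ ^ β) y) x
      = fderiv ℝ (fun y => (K * ‖y - a‖^(p-2) * ‖y - a₁‖^s * ‖y - a₂‖^t) • (y - a₁)
        + (K * ‖y - a‖^(p-2) * ‖y - a₁‖^t * ‖y - a₂‖^s) • (y - a₂)) x :=
    Filter.EventuallyEq.fderiv_eq
      (Filter.eventuallyEq_of_mem hmem (fun y hy => heq y hy.1 hy.2))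
  have hpl : pLap p (fun x => ‖x - a₁‖ ^ β * ‖x - a₂‖ ^ β) x
      = divg (fun y => (K * ‖y - a‖^(p-2) * ‖y - a₁‖^s * ‖y - a₂‖^t) • (y - a₁)
        + (K * ‖y - a‖^(p-2) * ‖y - a₁‖^t * ‖y - a₂‖^s) • (y - a₂)) x := by
    simp only [pLap, divg]
    rw [hfe]
  -- derivative of the explicit field
  have hA := hasFDerivAt_norm_sub_rpow a (p-2) hxa
  have hB := hasFDerivAt_norm_sub_rpow a₁ s hx₁
  have hC := hasFDerivAt_norm_sub_rpow a₂ t hx₂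
  have hB' := hasFDerivAt_norm_sub_rpow a₁ t hx₁
  have hC' := hasFDerivAt_norm_sub_rpow a₂ s hx₂
  have hid1 : HasFDerivAt (fun y : EuclideanSpace ℝ (Fin N) => y - a₁)
      (ContinuousLinearMap.id ℝ (EuclideanSpace ℝ (Fin N))) x := (hasFDerivAt_id x).sub_const a₁
  have hid2 : HasFDerivAt (fun y : EuclideanSpace ℝ (Fin N) => y - a₂)
      (ContinuousLinearMap.id ℝ (EuclideanSpace ℝ (Fin N))) x := (hasFDerivAt_id x).sub_const a₂
  have hf1 := ((hA.const_mul K).mul hB).mul hC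
  have hf2 := ((hA.const_mul K).mul hB').mul hC'
  have hdiv := divg_add_smul _ _ _ _ _ _ _ _ ((hf1.smul hid1).add (hf2.smul hid2))
  beta_reduce at hdiv
  simp only [Pi.mul_apply] at hdiv
  rw [hpl, (show divg (fun y => (K * ‖y - a‖^(p-2) * ‖y - a₁‖^s * ‖y - a₂‖^t) • (y - a₁)
        + (K * ‖y - a‖^(p-2) * ‖y - a₁‖^t * ‖y - a₂‖^s) • (y - a₂)) x = _ from hdiv)]
  simp only [ContinuousLinearMap.add_apply, ContinuousLinearMap.smul_apply,
    innerSL_apply_apply, smul_eq_mul]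
  have h2p : ∀ z : ℝ, 0 ≤ z → z^(2:ℝ) = z^2 := fun z hz => by
    rw [show (2:ℝ) = ((2:ℕ):ℝ) by norm_num, Real.rpow_natCast]
  have hi11 : (⟪x - a₁, x - a₁⟫:ℝ) = ‖x - a₁‖^2 := real_inner_self_eq_norm_sq _
  have hi22 : (⟪x - a₂, x - a₂⟫:ℝ) = ‖x - a₂‖^2 := real_inner_self_eq_norm_sq _
  have hi21 : (⟪x - a₂, x - a₁⟫:ℝ) = ⟪x - a₁, x - a₂⟫ := real_inner_comm _ _
  have him1 : (⟪x - a, x - a₁⟫:ℝ) = (‖x - a₁‖^2 + ⟪x - a₁, x - a₂⟫)/2 := by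
    rw [hmidpt x, real_inner_smul_left, inner_add_left, real_inner_self_eq_norm_sq, hi21]
    ring
  have him2 : (⟪x - a, x - a₂⟫:ℝ) = (⟪x - a₁, x - a₂⟫ + ‖x - a₂‖^2)/2 := by
    rw [hmidpt x, real_inner_smul_left, inner_add_left, real_inner_self_eq_norm_sq,
      real_inner_comm (x - a₂) (x - a₁)]
    ring
  have hd2 : ‖a₁ - a₂‖^2 = ‖x - a₁‖^2 - 2*⟪x - a₁, x - a₂⟫ + ‖x - a₂‖^2 := by
    rw [show a₁ - a₂ = (x - a₂) - (x - a₁) by abel, norm_sub_sq_real,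
      real_inner_comm (x - a₂) (x - a₁)]
    ring
  have hqe : (⟪x - a₁, x - a₂⟫:ℝ) = 2*‖x - a‖^2 - ‖x - a₁‖^2/2 - ‖x - a₂‖^2/2 := by
    have := hm2 x; linarith
  have hA4 : ‖x - a‖^(p-2-2) = ‖x - a‖^(p-4) := by rw [show p-2-2 = p-4 by ring]
  have hts : ‖x - a₁‖^(t-2) = ‖x - a₁‖^s := by
    rw [show t-2 = s by rw [hs, ht]; ring]
  have hts' : ‖x - a₂‖^(t-2) = ‖x - a₂‖^s := by
    rw [show t-2 = s by rw [hs, ht]; ring]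
  have hus2 : ‖x - a₁‖^(s-2) = ‖x - a₁‖^s / ‖x - a₁‖^2 := by
    rw [Real.rpow_sub hu, h2p _ (norm_nonneg _)]
  have hvs2 : ‖x - a₂‖^(s-2) = ‖x - a₂‖^s / ‖x - a₂‖^2 := by
    rw [Real.rpow_sub hv, h2p _ (norm_nonneg _)]
  have hut : ‖x - a₁‖^t = ‖x - a₁‖^s * ‖x - a₁‖^2 := by
    rw [show t = s + 2 by rw [hs, ht]; ring, Real.rpow_add hu, h2p _ (norm_nonneg _)]
  have hvt : ‖x - a₂‖^t = ‖x - a₂‖^s * ‖x - a₂‖^2 := by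
    rw [show t = s + 2 by rw [hs, ht]; ring, Real.rpow_add hv, h2p _ (norm_nonneg _)]
  have hmp2 : ‖x - a‖^(p-2) = ‖x - a‖^(p-4) * ‖x - a‖^2 := by
    rw [show p-2 = (p-4) + 2 by ring, Real.rpow_add hm, h2p _ (norm_nonneg _)]
  have hphi : (‖x - a₁‖^β * ‖x - a₂‖^β)^(p-1)
      = (‖x - a₁‖^s * ‖x - a₁‖^p) * (‖x - a₂‖^s * ‖x - a₂‖^p) := by
    rw [Real.mul_rpow (Real.rpow_nonneg (norm_nonneg _) _) (Real.rpow_nonneg (norm_nonneg _) _),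
      ← Real.rpow_mul (norm_nonneg _), ← Real.rpow_mul (norm_nonneg _),
      show β * (p-1) = s + p by rw [hs]; ring, Real.rpow_add hu, Real.rpow_add hv]
  have hcp : c^p = c^(p-2) * c^2 := by
    rw [← h2p c hc0.le, ← Real.rpow_add hc0, show p-2+2 = p by ring]
  have hcp1 : c^(p-1) = c^(p-2) * c := by
    rw [show p-1 = (p-2) + 1 by ring, Real.rpow_add hc0, Real.rpow_one]
  have hup0 : ‖x - a₁‖^p ≠ 0 := (Real.rpow_pos_of_pos hu p).ne'
  have hvp0 : ‖x - a₂‖^p ≠ 0 := (Real.rpow_pos_of_pos hv p).ne'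
  rw [hi11, hi22, hi21, him1, him2, hd2, hA4, hts, hts', hus2, hvs2, hut, hvt, hmp2, hphi,
    hcp, hcp1, hqe, hK, hs, ht, hβ, hcdef]
  field_simp
  ring

end MainProof
end

section
/- Let N ≥ 3 and 2 < p < N, and let a₁, a₂ ∈ ℝ^N be distinct points. Then the function φ(x) = |x−a₁|^{(p−N)/(2(p−1))}·|x−a₂|^{(p−N)/(2(p−1))} satisfies ∫_{ℝ^N} |∇φ|^p dx < ∞, i.e., φ belongs to the energy space D^{1,p}(ℝ^N). -/
open MeasureTheory

open Metric Set

lemma tsum_ofReal_geom {b : ℕ → ℝ} {q : ℝ} (hq0 : 0 ≤ q) (hq1 : q < 1)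
    (h : ∀ k, b (k + 1) = q * b k) : ∑' k : ℕ, ENNReal.ofReal (b k) < ⊤ := by
  have hb : ∀ k, b k = q ^ k * b 0 := by
    intro k
    induction k with
    | zero => simp
    | succ n ih => rw [h n, ih, pow_succ]; ring
  have : ∀ k, ENNReal.ofReal (b k) = ENNReal.ofReal q ^ k * ENNReal.ofReal (b 0) := by
    intro k
    rw [hb k, ENNReal.ofReal_mul (by positivity), ENNReal.ofReal_pow hq0]
  rw [tsum_congr this, ENNReal.tsum_mul_right, ENNReal.tsum_geometric]
  refine ENNReal.mul_lt_top ?_ ENNReal.ofReal_lt_top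
  rw [ENNReal.inv_lt_top]
  exact tsub_pos_iff_lt.2 (ENNReal.ofReal_lt_one.2 hq1)

lemma lintegral_ball_rpow_lt_top {N : ℕ} (hN : 0 < N) (a : EuclideanSpace ℝ (Fin N))
    {R α : ℝ} (hR : 0 < R) (hα : α < 0) (hNα : -(N : ℝ) < α) :
    ∫⁻ x in ball a R, ENNReal.ofReal (‖x - a‖ ^ α) < ⊤ := by
  haveI : Nonempty (Fin N) := ⟨⟨0, hN⟩⟩
  haveI : Nontrivial (EuclideanSpace ℝ (Fin N)) := inferInstance
  have hfr : Module.finrank ℝ (EuclideanSpace ℝ (Fin N)) = N := finrank_euclideanSpace_fin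
  set A : ℕ → Set (EuclideanSpace ℝ (Fin N)) := fun k => closedBall a (R / 2 ^ k) \ closedBall a (R / 2 ^ (k + 1)) with hA
  -- covering
  have hcov : ball a R ⊆ {a} ∪ ⋃ k, A k := by
    intro x hx
    rcases eq_or_ne x a with rfl | hxa
    · exact Or.inl rfl
    have hd : 0 < dist x a := dist_pos.2 hxa
    have hdR : dist x a < R := mem_ball.1 hx
    obtain ⟨k, hk1, hk2⟩ := exists_nat_pow_near (le_of_lt ((one_lt_div hd).2 hdR)) one_lt_two
    refine Or.inr (mem_iUnion.2 ⟨k, ?_, ?_⟩)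
    · rw [mem_closedBall]
      rw [le_div_iff₀ hd] at hk1
      rw [le_div_iff₀ (by positivity)]
      linarith
    · rw [mem_closedBall, not_le]
      rw [div_lt_iff₀ hd] at hk2
      rw [div_lt_iff₀ (by positivity)]
      linarith
  calc ∫⁻ x in ball a R, ENNReal.ofReal (‖x - a‖ ^ α)
      ≤ ∫⁻ x in {a} ∪ ⋃ k, A k, ENNReal.ofReal (‖x - a‖ ^ α) := lintegral_mono_set hcov
    _ ≤ (∫⁻ x in {a}, ENNReal.ofReal (‖x - a‖ ^ α))
        + ∫⁻ x in ⋃ k, A k, ENNReal.ofReal (‖x - a‖ ^ α) := lintegral_union_le _ _ _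
    _ < ⊤ := by
        have h1 : (∫⁻ x in ({a} : Set (EuclideanSpace ℝ (Fin N))), ENNReal.ofReal (‖x - a‖ ^ α)) = 0 := by
          rw [lintegral_singleton]
          simp [Real.zero_rpow (ne_of_lt hα)]
        rw [h1, zero_add]
        refine lt_of_le_of_lt (lintegral_iUnion_le _ _) ?_
        have hbound : ∀ k, (∫⁻ x in A k, ENNReal.ofReal (‖x - a‖ ^ α))
            ≤ ENNReal.ofReal ((R / 2 ^ (k + 1)) ^ α * (R / 2 ^ k) ^ (N : ℝ))
              * volume (ball (0 : EuclideanSpace ℝ (Fin N)) 1) := by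
          intro k
          have hstep : ∀ x ∈ A k,
              ENNReal.ofReal (‖x - a‖ ^ α) ≤ ENNReal.ofReal ((R / 2 ^ (k + 1)) ^ α) := by
            intro x hx
            refine ENNReal.ofReal_le_ofReal ?_
            have h2 : R / 2 ^ (k + 1) < ‖x - a‖ := by
              have := hx.2
              rw [mem_closedBall, not_le, dist_eq_norm] at this
              exact this
            exact Real.rpow_le_rpow_of_nonpos (by positivity) h2.le hα.le
          calc (∫⁻ x in A k, ENNReal.ofReal (‖x - a‖ ^ α))
              ≤ ∫⁻ _ in A k, ENNReal.ofReal ((R / 2 ^ (k + 1)) ^ α) :=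
                setLIntegral_mono measurable_const hstep
            _ = ENNReal.ofReal ((R / 2 ^ (k + 1)) ^ α) * volume (A k) := setLIntegral_const _ _
            _ ≤ ENNReal.ofReal ((R / 2 ^ (k + 1)) ^ α) * volume (closedBall a (R / 2 ^ k)) := by
                exact mul_le_mul_right (measure_mono diff_subset) _
            _ = ENNReal.ofReal ((R / 2 ^ (k + 1)) ^ α)
                * (ENNReal.ofReal ((R / 2 ^ k) ^ N) * volume (ball (0 : EuclideanSpace ℝ (Fin N)) 1)) := by
                have hvol := MeasureTheory.Measure.addHaar_closedBall (μ := volume) a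
                  (r := R / 2 ^ k) (by positivity)
                rw [hvol, hfr]
            _ = ENNReal.ofReal ((R / 2 ^ (k + 1)) ^ α * (R / 2 ^ k) ^ (N : ℝ))
                * volume (ball (0 : EuclideanSpace ℝ (Fin N)) 1) := by
                rw [ENNReal.ofReal_mul (by positivity), Real.rpow_natCast, mul_assoc]
        refine lt_of_le_of_lt (ENNReal.tsum_le_tsum hbound) ?_
        rw [ENNReal.tsum_mul_right]
        refine ENNReal.mul_lt_top ?_ measure_ball_lt_top
        refine tsum_ofReal_geom (q := (2:ℝ) ^ (-(α + N))) (by positivity)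
          (Real.rpow_lt_one_of_one_lt_of_neg one_lt_two (by linarith)) ?_
        intro k
        have h2 : (0:ℝ) < 2 := two_pos
        have e1 : R / 2 ^ (k + 1 + 1) = (R / 2 ^ (k + 1)) / 2 := by ring
        have e2 : R / 2 ^ (k + 1) = (R / 2 ^ k) / 2 := by ring
        have hx1 : (R / 2 ^ (k + 1 + 1) : ℝ) ^ α = (R / 2 ^ (k + 1)) ^ α * 2 ^ (-α) := by
          rw [e1, Real.div_rpow (by positivity) h2.le, Real.rpow_neg h2.le, div_eq_mul_inv]
        have hx2 : (R / 2 ^ (k + 1) : ℝ) ^ (N : ℝ) = (R / 2 ^ k) ^ (N : ℝ) * 2 ^ (-(N : ℝ)) := by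
          rw [e2, Real.div_rpow (by positivity) h2.le, Real.rpow_neg h2.le, div_eq_mul_inv]
        have hq : (2 : ℝ) ^ (-(α + (N : ℝ))) = 2 ^ (-α) * 2 ^ (-(N : ℝ)) := by
          rw [← Real.rpow_add h2]; ring_nf
        rw [hx1, hx2, hq]; ring

lemma lintegral_compl_ball_rpow_lt_top {N : ℕ} (hN : 0 < N) (a : EuclideanSpace ℝ (Fin N))
    {R s : ℝ} (hR : 0 < R) (hs : s < -(N : ℝ)) :
    ∫⁻ x in (ball a R)ᶜ, ENNReal.ofReal (‖x - a‖ ^ s) < ⊤ := by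
  haveI : Nonempty (Fin N) := ⟨⟨0, hN⟩⟩
  haveI : Nontrivial (EuclideanSpace ℝ (Fin N)) := inferInstance
  have hfr : Module.finrank ℝ (EuclideanSpace ℝ (Fin N)) = N := finrank_euclideanSpace_fin
  set A : ℕ → Set (EuclideanSpace ℝ (Fin N)) :=
    fun k => ball a (R * 2 ^ (k + 1)) \ ball a (R * 2 ^ k) with hA
  have hcov : (ball a R)ᶜ ⊆ ⋃ k, A k := by
    intro x hx
    rw [mem_compl_iff, mem_ball, not_lt] at hx
    have hd : 0 < dist x a := lt_of_lt_of_le hR hx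
    obtain ⟨k, hk1, hk2⟩ := exists_nat_pow_near ((one_le_div hR).2 hx) one_lt_two
    rw [le_div_iff₀ hR] at hk1
    rw [div_lt_iff₀ hR] at hk2
    refine mem_iUnion.2 ⟨k, ?_, ?_⟩
    · rw [mem_ball]; linarith
    · rw [mem_ball, not_lt]; linarith
  refine lt_of_le_of_lt (lintegral_mono_set hcov) ?_
  refine lt_of_le_of_lt (lintegral_iUnion_le _ _) ?_
  have hbound : ∀ k, (∫⁻ x in A k, ENNReal.ofReal (‖x - a‖ ^ s))
      ≤ ENNReal.ofReal ((R * 2 ^ k) ^ s * (R * 2 ^ (k + 1)) ^ (N : ℝ))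
        * volume (ball (0 : EuclideanSpace ℝ (Fin N)) 1) := by
    intro k
    have hstep : ∀ x ∈ A k,
        ENNReal.ofReal (‖x - a‖ ^ s) ≤ ENNReal.ofReal ((R * 2 ^ k) ^ s) := by
      intro x hx
      refine ENNReal.ofReal_le_ofReal ?_
      have h2 : R * 2 ^ k ≤ ‖x - a‖ := by
        have := hx.2
        rw [mem_ball, not_lt, dist_eq_norm] at this
        exact this
      have hN' : (0:ℝ) < N := by exact_mod_cast hN
      exact Real.rpow_le_rpow_of_nonpos (by positivity) h2 (by linarith)
    calc (∫⁻ x in A k, ENNReal.ofReal (‖x - a‖ ^ s))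
        ≤ ∫⁻ _ in A k, ENNReal.ofReal ((R * 2 ^ k) ^ s) := setLIntegral_mono measurable_const hstep
      _ = ENNReal.ofReal ((R * 2 ^ k) ^ s) * volume (A k) := setLIntegral_const _ _
      _ ≤ ENNReal.ofReal ((R * 2 ^ k) ^ s) * volume (ball a (R * 2 ^ (k + 1))) :=
          mul_le_mul_right (measure_mono diff_subset) _
      _ = ENNReal.ofReal ((R * 2 ^ k) ^ s)
          * (ENNReal.ofReal ((R * 2 ^ (k + 1)) ^ N) * volume (ball (0 : EuclideanSpace ℝ (Fin N)) 1)) := by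
          have hvol := MeasureTheory.Measure.addHaar_ball (μ := volume) a
            (r := R * 2 ^ (k + 1)) (by positivity)
          rw [hvol, hfr]
      _ = ENNReal.ofReal ((R * 2 ^ k) ^ s * (R * 2 ^ (k + 1)) ^ (N : ℝ))
          * volume (ball (0 : EuclideanSpace ℝ (Fin N)) 1) := by
          rw [ENNReal.ofReal_mul (by positivity), Real.rpow_natCast, mul_assoc]
  refine lt_of_le_of_lt (ENNReal.tsum_le_tsum hbound) ?_
  rw [ENNReal.tsum_mul_right]
  refine ENNReal.mul_lt_top ?_ measure_ball_lt_top
  refine tsum_ofReal_geom (q := (2:ℝ) ^ (s + N)) (by positivity)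
    (Real.rpow_lt_one_of_one_lt_of_neg one_lt_two (by linarith)) ?_
  intro k
  have h2 : (0:ℝ) < 2 := two_pos
  have hx1 : (R * 2 ^ (k + 1) : ℝ) ^ s = (R * 2 ^ k) ^ s * 2 ^ (s : ℝ) := by
    rw [show (R * 2 ^ (k + 1) : ℝ) = (R * 2 ^ k) * 2 by ring,
      Real.mul_rpow (by positivity) h2.le]
  have hx2 : (R * 2 ^ (k + 1 + 1) : ℝ) ^ (N : ℝ) = (R * 2 ^ (k + 1)) ^ (N : ℝ) * 2 ^ (N : ℝ) := by
    rw [show (R * 2 ^ (k + 1 + 1) : ℝ) = (R * 2 ^ (k + 1)) * 2 by ring,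
      Real.mul_rpow (by positivity) h2.le]
  have hq : (2 : ℝ) ^ (s + (N : ℝ)) = 2 ^ (s : ℝ) * 2 ^ (N : ℝ) := Real.rpow_add h2 _ _
  rw [hx1, hx2, hq]; ring

lemma lintegral_two_point_rpow_lt_top {N : ℕ} (hN : 0 < N)
    (a b : EuclideanSpace ℝ (Fin N)) (hab : a ≠ b) {α γ : ℝ}
    (hα : α < 0) (hγ : γ < 0) (hNα : -(N : ℝ) < α) (hNγ : -(N : ℝ) < γ)
    (hsum : α + γ < -(N : ℝ)) :
    ∫⁻ x, ENNReal.ofReal (‖x - a‖ ^ α * ‖x - b‖ ^ γ) < ⊤ := by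
  set d : ℝ := ‖b - a‖ with hd
  have hd0 : 0 < d := by rw [hd, norm_pos_iff, sub_ne_zero]; exact (Ne.symm hab)
  set r : ℝ := d / 2 with hr
  have hr0 : 0 < r := by positivity
  set S₄ : Set (EuclideanSpace ℝ (Fin N)) := closedBall a (2 * d) \ (ball a r ∪ ball b r) with hS₄
  have hcov : (univ : Set (EuclideanSpace ℝ (Fin N)))
      ⊆ ball a r ∪ (ball b r ∪ ((ball a (2 * d))ᶜ ∪ S₄)) := by
    intro x _
    by_cases h1 : x ∈ ball a r
    · exact Or.inl h1
    by_cases h2 : x ∈ ball b r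
    · exact Or.inr (Or.inl h2)
    by_cases h3 : x ∈ ball a (2 * d)
    · refine Or.inr (Or.inr (Or.inr ⟨?_, ?_⟩))
      · exact ball_subset_closedBall h3
      · simp only [mem_union]; tauto
    · exact Or.inr (Or.inr (Or.inl h3))
  have hmeas : Measurable fun x : EuclideanSpace ℝ (Fin N) =>
      ENNReal.ofReal (‖x - a‖ ^ α * ‖x - b‖ ^ γ) := by fun_prop
  have hT1 : ∫⁻ x in ball a r, ENNReal.ofReal (‖x - a‖ ^ α * ‖x - b‖ ^ γ) < ⊤ := by
    have hb : ∀ x ∈ ball a r, ENNReal.ofReal (‖x - a‖ ^ α * ‖x - b‖ ^ γ)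
        ≤ ENNReal.ofReal (r ^ γ) * ENNReal.ofReal (‖x - a‖ ^ α) := by
      intro x hx
      rw [← ENNReal.ofReal_mul (by positivity)]
      refine ENNReal.ofReal_le_ofReal ?_
      have h1 : r ≤ ‖x - b‖ := by
        have t1 : dist b a ≤ dist b x + dist x a := dist_triangle _ _ _
        have t2 : dist x a < r := mem_ball.1 hx
        have t3 : d = dist b a := by rw [hd, dist_eq_norm]
        have t4 : ‖x - b‖ = dist b x := by rw [dist_eq_norm, norm_sub_rev]
        rw [t4]; rw [hr] at t2 ⊢; linarith
      have h2 : ‖x - b‖ ^ γ ≤ r ^ γ := Real.rpow_le_rpow_of_nonpos hr0 h1 hγ.le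
      have h3 : (0:ℝ) ≤ ‖x - a‖ ^ α := by positivity
      calc ‖x - a‖ ^ α * ‖x - b‖ ^ γ ≤ ‖x - a‖ ^ α * r ^ γ :=
            mul_le_mul_of_nonneg_left h2 h3
        _ = r ^ γ * ‖x - a‖ ^ α := mul_comm _ _
    refine lt_of_le_of_lt (setLIntegral_mono (by fun_prop) hb) ?_
    rw [lintegral_const_mul' _ _ ENNReal.ofReal_ne_top]
    exact ENNReal.mul_lt_top ENNReal.ofReal_lt_top
      (lintegral_ball_rpow_lt_top hN a hr0 hα hNα)
  have hT2 : ∫⁻ x in ball b r, ENNReal.ofReal (‖x - a‖ ^ α * ‖x - b‖ ^ γ) < ⊤ := by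
    have hb : ∀ x ∈ ball b r, ENNReal.ofReal (‖x - a‖ ^ α * ‖x - b‖ ^ γ)
        ≤ ENNReal.ofReal (r ^ α) * ENNReal.ofReal (‖x - b‖ ^ γ) := by
      intro x hx
      rw [← ENNReal.ofReal_mul (by positivity)]
      refine ENNReal.ofReal_le_ofReal ?_
      have h1 : r ≤ ‖x - a‖ := by
        have t1 : dist a b ≤ dist a x + dist x b := dist_triangle _ _ _
        have t2 : dist x b < r := mem_ball.1 hx
        have t3 : d = dist a b := by rw [hd, dist_eq_norm, norm_sub_rev]
        have t4 : ‖x - a‖ = dist a x := by rw [dist_eq_norm, norm_sub_rev]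
        rw [t4]; rw [hr] at t2 ⊢; linarith
      have h2 : ‖x - a‖ ^ α ≤ r ^ α := Real.rpow_le_rpow_of_nonpos hr0 h1 hα.le
      have h3 : (0:ℝ) ≤ ‖x - b‖ ^ γ := by positivity
      exact mul_le_mul_of_nonneg_right h2 h3
    refine lt_of_le_of_lt (setLIntegral_mono (by fun_prop) hb) ?_
    rw [lintegral_const_mul' _ _ ENNReal.ofReal_ne_top]
    exact ENNReal.mul_lt_top ENNReal.ofReal_lt_top
      (lintegral_ball_rpow_lt_top hN b hr0 hγ hNγ)
  have hT3 : ∫⁻ x in (ball a (2 * d))ᶜ, ENNReal.ofReal (‖x - a‖ ^ α * ‖x - b‖ ^ γ) < ⊤ := by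
    have hb : ∀ x ∈ (ball a (2 * d))ᶜ, ENNReal.ofReal (‖x - a‖ ^ α * ‖x - b‖ ^ γ)
        ≤ ENNReal.ofReal ((2:ℝ) ^ (-γ)) * ENNReal.ofReal (‖x - a‖ ^ (α + γ)) := by
      intro x hx
      rw [mem_compl_iff, mem_ball, not_lt, dist_eq_norm] at hx
      have hxa : 0 < ‖x - a‖ := lt_of_lt_of_le (by positivity) hx
      rw [← ENNReal.ofReal_mul (by positivity)]
      refine ENNReal.ofReal_le_ofReal ?_
      have h1 : ‖x - a‖ / 2 ≤ ‖x - b‖ := by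
        have t1 : ‖x - a‖ ≤ ‖x - b‖ + ‖b - a‖ := norm_sub_le_norm_sub_add_norm_sub _ _ _
        linarith
      have h2 : ‖x - b‖ ^ γ ≤ (‖x - a‖ / 2) ^ γ :=
        Real.rpow_le_rpow_of_nonpos (by positivity) h1 hγ.le
      have h3 : (‖x - a‖ / 2) ^ γ = ‖x - a‖ ^ γ * 2 ^ (-γ) := by
        rw [Real.div_rpow (norm_nonneg _) (by norm_num), Real.rpow_neg (by norm_num),
          div_eq_mul_inv]
      calc ‖x - a‖ ^ α * ‖x - b‖ ^ γ ≤ ‖x - a‖ ^ α * ((‖x - a‖ / 2) ^ γ) :=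
            mul_le_mul_of_nonneg_left h2 (by positivity)
        _ = 2 ^ (-γ) * ‖x - a‖ ^ (α + γ) := by
            rw [h3, Real.rpow_add hxa]; ring
    refine lt_of_le_of_lt (setLIntegral_mono (by fun_prop) hb) ?_
    rw [lintegral_const_mul' _ _ ENNReal.ofReal_ne_top]
    exact ENNReal.mul_lt_top ENNReal.ofReal_lt_top
      (lintegral_compl_ball_rpow_lt_top hN a (by positivity) hsum)
  have hT4 : ∫⁻ x in S₄, ENNReal.ofReal (‖x - a‖ ^ α * ‖x - b‖ ^ γ) < ⊤ := by
    have hb : ∀ x ∈ S₄, ENNReal.ofReal (‖x - a‖ ^ α * ‖x - b‖ ^ γ)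
        ≤ ENNReal.ofReal (r ^ α * r ^ γ) := by
      intro x hx
      refine ENNReal.ofReal_le_ofReal ?_
      have hx2 := hx.2
      rw [mem_union] at hx2
      push_neg at hx2
      have h1 : r ≤ ‖x - a‖ := by
        have := hx2.1; rw [mem_ball, not_lt, dist_eq_norm] at this; exact this
      have h2 : r ≤ ‖x - b‖ := by
        have := hx2.2; rw [mem_ball, not_lt, dist_eq_norm] at this; exact this
      exact mul_le_mul (Real.rpow_le_rpow_of_nonpos hr0 h1 hα.le)
        (Real.rpow_le_rpow_of_nonpos hr0 h2 hγ.le) (by positivity) (by positivity)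
    refine lt_of_le_of_lt (setLIntegral_mono measurable_const hb) ?_
    rw [setLIntegral_const]
    exact ENNReal.mul_lt_top ENNReal.ofReal_lt_top
      (lt_of_le_of_lt (measure_mono diff_subset) measure_closedBall_lt_top)
  calc ∫⁻ x, ENNReal.ofReal (‖x - a‖ ^ α * ‖x - b‖ ^ γ)
      = ∫⁻ x in univ, ENNReal.ofReal (‖x - a‖ ^ α * ‖x - b‖ ^ γ) := (setLIntegral_univ _).symm
    _ ≤ ∫⁻ x in ball a r ∪ (ball b r ∪ ((ball a (2 * d))ᶜ ∪ S₄)),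
        ENNReal.ofReal (‖x - a‖ ^ α * ‖x - b‖ ^ γ) := lintegral_mono_set hcov
    _ ≤ (∫⁻ x in ball a r, ENNReal.ofReal (‖x - a‖ ^ α * ‖x - b‖ ^ γ))
        + ((∫⁻ x in ball b r, ENNReal.ofReal (‖x - a‖ ^ α * ‖x - b‖ ^ γ))
          + ((∫⁻ x in (ball a (2 * d))ᶜ, ENNReal.ofReal (‖x - a‖ ^ α * ‖x - b‖ ^ γ))
            + ∫⁻ x in S₄, ENNReal.ofReal (‖x - a‖ ^ α * ‖x - b‖ ^ γ))) := by
        refine (lintegral_union_le _ _ _).trans (add_le_add_right ?_ _)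
        refine (lintegral_union_le _ _ _).trans (add_le_add_right ?_ _)
        exact lintegral_union_le _ _ _
    _ < ⊤ := ENNReal.add_lt_top.2 ⟨hT1, ENNReal.add_lt_top.2 ⟨hT2,
        ENNReal.add_lt_top.2 ⟨hT3, hT4⟩⟩⟩


set_option maxHeartbeats 1000000 in
/-- for `N ≥ 3` and `2 < p < N`, the function
`φ(x) = |x-a₁|^{(p-N)/(2(p-1))} |x-a₂|^{(p-N)/(2(p-1))}` has finite `p`-energy
`∫ |∇φ|^p < ∞`, i.e. it belongs to `D^{1,p}(ℝ^N)`. -/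
theorem minimizer_in_energy_space (N : ℕ) (hN : 3 ≤ N) (p : ℝ) (hp : 2 < p) (hpN : p < N)
    (a₁ a₂ : EuclideanSpace ℝ (Fin N)) (hne : a₁ ≠ a₂)
    (φ : EuclideanSpace ℝ (Fin N) → ℝ)
    (hφ : φ = fun x => ‖x - a₁‖ ^ ((p - N) / (2 * (p - 1))) *
      ‖x - a₂‖ ^ ((p - N) / (2 * (p - 1)))) :
    ∫⁻ x, ENNReal.ofReal (‖gradient φ x‖ ^ p) < ⊤ := by
  have hN0 : 0 < N := by omega
  have hNr : (3:ℝ) ≤ N := by exact_mod_cast hN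
  have hp1 : (0:ℝ) < p - 1 := by linarith
  have hp0 : (0:ℝ) < p := by linarith
  set β : ℝ := (p - N) / (2 * (p - 1)) with hβ
  have hβneg : β < 0 := div_neg_of_neg_of_pos (by linarith) (by linarith)
  set α₁ : ℝ := (β - 1) * p with hα₁
  set γ₁ : ℝ := β * p with hγ₁
  have hE1 : α₁ < 0 := mul_neg_of_neg_of_pos (by linarith) hp0
  have hE2 : γ₁ < 0 := mul_neg_of_neg_of_pos hβneg hp0
  have hfrac1 : α₁ + N = ((p - 2) * (N - p)) / (2 * (p - 1)) := by
    rw [hα₁, hβ]; field_simp; ring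
  have hE3 : -(N:ℝ) < α₁ := by
    have : (0:ℝ) < ((p - 2) * (N - p)) / (2 * (p - 1)) :=
      div_pos (mul_pos (by linarith) (by linarith)) (by linarith)
    linarith
  have hfrac2 : γ₁ + N = (p * p + N * (p - 2)) / (2 * (p - 1)) := by
    rw [hγ₁, hβ]; field_simp; ring
  have hE4 : -(N:ℝ) < γ₁ := by
    have : (0:ℝ) < (p * p + N * (p - 2)) / (2 * (p - 1)) := by
      have h1 : (0:ℝ) < p * p := by nlinarith
      have h2 : (0:ℝ) < N * (p - 2) := by nlinarith
      positivity
    linarith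
  have hfrac3 : (α₁ + γ₁) + N = (p - N) / (p - 1) := by
    rw [hα₁, hγ₁, hβ]; field_simp; ring
  have hE5 : α₁ + γ₁ < -(N:ℝ) := by
    have : (p - N) / (p - 1) < 0 := div_neg_of_neg_of_pos (by linarith) hp1
    linarith
  -- the exceptional null set
  have hsing : ∀ z : EuclideanSpace ℝ (Fin N), volume ({z} : Set _) = 0 := by
    haveI : Nonempty (Fin N) := ⟨⟨0, hN0⟩⟩
    intro z
    rw [← Metric.closedBall_zero,
      MeasureTheory.Measure.addHaar_closedBall (μ := volume) z le_rfl,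
      finrank_euclideanSpace_fin, zero_pow (by omega : N ≠ 0)]
    simp
  have hae : ∀ᵐ x : EuclideanSpace ℝ (Fin N), x ≠ a₁ ∧ x ≠ a₂ := by
    have h0 : volume ({a₁} ∪ {a₂} : Set (EuclideanSpace ℝ (Fin N))) = 0 :=
      measure_union_null (hsing a₁) (hsing a₂)
    filter_upwards [compl_mem_ae_iff.2 h0] with x hx
    simp only [Set.mem_compl_iff, Set.mem_union, Set.mem_singleton_iff, not_or] at hx
    exact hx
  -- pointwise a.e. bound
  set c : ℝ := |β| ^ p * 2 ^ p with hc
  have hc0 : 0 ≤ c := by positivity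
  have hmain : ∀ᵐ x : EuclideanSpace ℝ (Fin N),
      ENNReal.ofReal (‖gradient φ x‖ ^ p)
        ≤ ENNReal.ofReal c * (ENNReal.ofReal (‖x - a₁‖ ^ α₁ * ‖x - a₂‖ ^ γ₁)
          + ENNReal.ofReal (‖x - a₁‖ ^ γ₁ * ‖x - a₂‖ ^ α₁)) := by
    filter_upwards [hae] with x hx
    obtain ⟨hx1, hx2⟩ := hx
    set n₁ : ℝ := ‖x - a₁‖ with hn₁
    set n₂ : ℝ := ‖x - a₂‖ with hn₂
    have pos₁ : 0 < n₁ := norm_pos_iff.2 (sub_ne_zero.2 hx1)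
    have pos₂ : 0 < n₂ := norm_pos_iff.2 (sub_ne_zero.2 hx2)
    have hlip : ∀ aa : EuclideanSpace ℝ (Fin N),
        LipschitzWith 1 (fun y : EuclideanSpace ℝ (Fin N) => ‖y - aa‖) := by
      intro aa
      refine LipschitzWith.of_dist_le_mul fun y z => ?_
      rw [NNReal.coe_one, one_mul, Real.dist_eq, dist_eq_norm]
      calc |‖y - aa‖ - ‖z - aa‖| ≤ ‖(y - aa) - (z - aa)‖ := abs_norm_sub_norm_le _ _
        _ = ‖y - z‖ := by rw [show (y - aa) - (z - aa) = y - z by abel]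
    have hdiff1 : DifferentiableAt ℝ (fun y : EuclideanSpace ℝ (Fin N) => ‖y - a₁‖) x :=
      DifferentiableAt.norm ℝ (differentiableAt_id.sub (differentiableAt_const _))
        (sub_ne_zero.2 hx1)
    have hdiff2 : DifferentiableAt ℝ (fun y : EuclideanSpace ℝ (Fin N) => ‖y - a₂‖) x :=
      DifferentiableAt.norm ℝ (differentiableAt_id.sub (differentiableAt_const _))
        (sub_ne_zero.2 hx2)
    set D₁ := fderiv ℝ (fun y : EuclideanSpace ℝ (Fin N) => ‖y - a₁‖) x with hD₁def
    set D₂ := fderiv ℝ (fun y : EuclideanSpace ℝ (Fin N) => ‖y - a₂‖) x with hD₂def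
    have hD₁ : HasFDerivAt (fun y : EuclideanSpace ℝ (Fin N) => ‖y - a₁‖) D₁ x :=
      hdiff1.hasFDerivAt
    have hD₂ : HasFDerivAt (fun y : EuclideanSpace ℝ (Fin N) => ‖y - a₂‖) D₂ x :=
      hdiff2.hasFDerivAt
    have hD₁n : ‖D₁‖ ≤ 1 := by simpa using hD₁.le_of_lipschitz (hlip a₁)
    have hD₂n : ‖D₂‖ ≤ 1 := by simpa using hD₂.le_of_lipschitz (hlip a₂)
    have hu : HasFDerivAt (fun y : EuclideanSpace ℝ (Fin N) => ‖y - a₁‖ ^ β)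
        ((β * n₁ ^ (β - 1)) • D₁) x :=
      by have := (Real.hasDerivAt_rpow_const (x := n₁) (p := β) (Or.inl pos₁.ne')).comp_hasFDerivAt x hD₁
         exact this
    have hv : HasFDerivAt (fun y : EuclideanSpace ℝ (Fin N) => ‖y - a₂‖ ^ β)
        ((β * n₂ ^ (β - 1)) • D₂) x :=
      by have := (Real.hasDerivAt_rpow_const (x := n₂) (p := β) (Or.inl pos₂.ne')).comp_hasFDerivAt x hD₂
         exact this
    have hφx : HasFDerivAt φ
        (n₁ ^ β • ((β * n₂ ^ (β - 1)) • D₂) + n₂ ^ β • ((β * n₁ ^ (β - 1)) • D₁)) x := by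
      rw [hφ]; exact hu.mul hv
    have hgradnorm : ‖gradient φ x‖ = ‖fderiv ℝ φ x‖ := by
      simp only [gradient, LinearIsometryEquiv.norm_map]
    set f₁ : ℝ := n₁ ^ β * n₂ ^ (β - 1) with hf₁
    set f₂ : ℝ := n₁ ^ (β - 1) * n₂ ^ β with hf₂
    have hf₁0 : 0 ≤ f₁ := by positivity
    have hf₂0 : 0 ≤ f₂ := by positivity
    have hb1 : ‖fderiv ℝ φ x‖ ≤ |β| * (f₁ + f₂) := by
      rw [hφx.fderiv]
      refine (norm_add_le _ _).trans ?_
      rw [norm_smul, norm_smul, norm_smul, norm_smul]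
      simp only [Real.norm_eq_abs, abs_mul]
      rw [abs_of_nonneg (Real.rpow_nonneg (norm_nonneg _) β),
        abs_of_nonneg (Real.rpow_nonneg (norm_nonneg _) β),
        abs_of_nonneg (Real.rpow_nonneg (norm_nonneg _) (β - 1)),
        abs_of_nonneg (Real.rpow_nonneg (norm_nonneg _) (β - 1))]
      have t1 : n₁ ^ β * (|β| * n₂ ^ (β - 1) * ‖D₂‖) ≤ |β| * f₁ := by
        have h1 : |β| * n₂ ^ (β - 1) * ‖D₂‖ ≤ |β| * n₂ ^ (β - 1) * 1 :=
          mul_le_mul_of_nonneg_left hD₂n (by positivity)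
        calc n₁ ^ β * (|β| * n₂ ^ (β - 1) * ‖D₂‖)
            ≤ n₁ ^ β * (|β| * n₂ ^ (β - 1) * 1) :=
              mul_le_mul_of_nonneg_left h1 (by positivity)
          _ = |β| * f₁ := by rw [hf₁]; ring
      have t2 : n₂ ^ β * (|β| * n₁ ^ (β - 1) * ‖D₁‖) ≤ |β| * f₂ := by
        have h1 : |β| * n₁ ^ (β - 1) * ‖D₁‖ ≤ |β| * n₁ ^ (β - 1) * 1 :=
          mul_le_mul_of_nonneg_left hD₁n (by positivity)
        calc n₂ ^ β * (|β| * n₁ ^ (β - 1) * ‖D₁‖)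
            ≤ n₂ ^ β * (|β| * n₁ ^ (β - 1) * 1) :=
              mul_le_mul_of_nonneg_left h1 (by positivity)
          _ = |β| * f₂ := by rw [hf₂]; ring
      linarith
    have hb2 : ‖gradient φ x‖ ^ p ≤ c * ((n₁ ^ α₁ * n₂ ^ γ₁) + (n₁ ^ γ₁ * n₂ ^ α₁)) := by
      have s1 : ‖gradient φ x‖ ^ p ≤ (|β| * (f₁ + f₂)) ^ p := by
        refine Real.rpow_le_rpow (norm_nonneg _) ?_ hp0.le
        rw [hgradnorm]; exact hb1
      have s2 : (|β| * (f₁ + f₂)) ^ p = |β| ^ p * (f₁ + f₂) ^ p :=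
        Real.mul_rpow (abs_nonneg β) (by positivity)
      have s3 : (f₁ + f₂) ^ p ≤ 2 ^ p * (f₁ ^ p + f₂ ^ p) := by
        calc (f₁ + f₂) ^ p ≤ (2 * max f₁ f₂) ^ p := by
              refine Real.rpow_le_rpow (by positivity) ?_ hp0.le
              have := le_max_left f₁ f₂
              have := le_max_right f₁ f₂
              linarith
          _ = 2 ^ p * (max f₁ f₂) ^ p :=
              Real.mul_rpow (by norm_num) (le_trans hf₁0 (le_max_left _ _))
          _ ≤ 2 ^ p * (f₁ ^ p + f₂ ^ p) := by
              refine mul_le_mul_of_nonneg_left ?_ (by positivity)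
              rcases max_cases f₁ f₂ with ⟨h, _⟩ | ⟨h, _⟩ <;> rw [h]
              · exact le_add_of_nonneg_right (Real.rpow_nonneg hf₂0 p)
              · exact le_add_of_nonneg_left (Real.rpow_nonneg hf₁0 p)
      have e₁ : f₁ ^ p = n₁ ^ γ₁ * n₂ ^ α₁ := by
        rw [hf₁, Real.mul_rpow (by positivity) (by positivity), hγ₁, hα₁,
          Real.rpow_mul pos₁.le, Real.rpow_mul pos₂.le]
      have e₂ : f₂ ^ p = n₁ ^ α₁ * n₂ ^ γ₁ := by
        rw [hf₂, Real.mul_rpow (by positivity) (by positivity), hγ₁, hα₁,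
          Real.rpow_mul pos₁.le, Real.rpow_mul pos₂.le]
      calc ‖gradient φ x‖ ^ p ≤ |β| ^ p * (f₁ + f₂) ^ p := by rw [← s2]; exact s1
        _ ≤ |β| ^ p * (2 ^ p * (f₁ ^ p + f₂ ^ p)) :=
            mul_le_mul_of_nonneg_left s3 (by positivity)
        _ = c * ((n₁ ^ α₁ * n₂ ^ γ₁) + (n₁ ^ γ₁ * n₂ ^ α₁)) := by
            rw [e₁, e₂, hc]; ring
    calc ENNReal.ofReal (‖gradient φ x‖ ^ p)
        ≤ ENNReal.ofReal (c * ((n₁ ^ α₁ * n₂ ^ γ₁) + (n₁ ^ γ₁ * n₂ ^ α₁))) :=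
          ENNReal.ofReal_le_ofReal hb2
      _ = ENNReal.ofReal c * (ENNReal.ofReal (n₁ ^ α₁ * n₂ ^ γ₁)
          + ENNReal.ofReal (n₁ ^ γ₁ * n₂ ^ α₁)) := by
          rw [ENNReal.ofReal_mul hc0, ENNReal.ofReal_add (by positivity) (by positivity)]
  -- assemble
  calc ∫⁻ x, ENNReal.ofReal (‖gradient φ x‖ ^ p)
      ≤ ∫⁻ x, ENNReal.ofReal c * (ENNReal.ofReal (‖x - a₁‖ ^ α₁ * ‖x - a₂‖ ^ γ₁)
          + ENNReal.ofReal (‖x - a₁‖ ^ γ₁ * ‖x - a₂‖ ^ α₁)) := lintegral_mono_ae hmain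
    _ = ENNReal.ofReal c * ∫⁻ x, (ENNReal.ofReal (‖x - a₁‖ ^ α₁ * ‖x - a₂‖ ^ γ₁)
          + ENNReal.ofReal (‖x - a₁‖ ^ γ₁ * ‖x - a₂‖ ^ α₁)) :=
        lintegral_const_mul' _ _ ENNReal.ofReal_ne_top
    _ = ENNReal.ofReal c * ((∫⁻ x, ENNReal.ofReal (‖x - a₁‖ ^ α₁ * ‖x - a₂‖ ^ γ₁))
          + ∫⁻ x, ENNReal.ofReal (‖x - a₁‖ ^ γ₁ * ‖x - a₂‖ ^ α₁)) := by
        rw [lintegral_add_left (by fun_prop)]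
    _ < ⊤ := by
        refine ENNReal.mul_lt_top ENNReal.ofReal_lt_top (ENNReal.add_lt_top.2 ⟨?_, ?_⟩)
        · exact lintegral_two_point_rpow_lt_top hN0 a₁ a₂ hne hE1 hE2 hE3 hE4 hE5
        · exact lintegral_two_point_rpow_lt_top hN0 a₁ a₂ hne hE2 hE1 hE4 hE3
            (by rw [add_comm]; exact hE5)
end

section
/- For every real p ≥ 2 and every x, y ∈ ℝ^N one has |x+y|^p − p|y|^{p−2}(y·x) − |y|^p ≤ (p(p−1)/2)·(|x|+|y|)^{p−2}·|x|². -/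
open Real Set Filter Topology

lemma shafrir_key (p a b c : ℝ) (hp : 2 < p) (ha : 0 < a) (hb : 0 ≤ b)
    (hc : c ^ 2 ≤ a ^ 2 * b ^ 2) :
    (a ^ 2 + 2 * c + b ^ 2) ^ (p / 2) - p * b ^ (p - 2) * c - b ^ p ≤
      p * (p - 1) / 2 * (a + b) ^ (p - 2) * a ^ 2 := by
  set q : ℝ → ℝ := fun t => a ^ 2 * t ^ 2 + 2 * c * t + b ^ 2 with hqdef
  set g : ℝ → ℝ := fun t => (q t) ^ (p / 2) with hgdef
  set g1 : ℝ → ℝ := fun t => p * (q t) ^ ((p - 2) / 2) * (a ^ 2 * t + c) with hg1def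
  set M : ℝ := p * (p - 1) * (a + b) ^ (p - 2) * a ^ 2 with hMdef
  have hab : 0 ≤ a + b := by linarith
  have hcabs := abs_le_of_sq_le_sq' (by nlinarith : c ^ 2 ≤ (a * b) ^ 2) (by positivity)
  have hq0 : ∀ t, 0 ≤ q t := by
    intro t
    have ha2 : 0 < a ^ 2 := by positivity
    have : a ^ 2 * q t = (a ^ 2 * t + c) ^ 2 + (a ^ 2 * b ^ 2 - c ^ 2) := by
      simp only [hqdef]; ring
    nlinarith [sq_nonneg (a ^ 2 * t + c)]
  have hdisc : ∀ t, (a ^ 2 * t + c) ^ 2 ≤ a ^ 2 * q t := by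
    intro t; simp only [hqdef]; nlinarith
  -- q is bounded on [0,1]
  have hqle : ∀ t ∈ Icc (0:ℝ) 1, q t ≤ (a + b) ^ 2 := by
    intro t ht
    simp only [hqdef]
    have h1 : c * t ≤ a * b * t := mul_le_mul_of_nonneg_right hcabs.2 ht.1
    have h2 : a * b * t ≤ a * b := mul_le_of_le_one_right (mul_nonneg ha.le hb) ht.2
    have h3 : t ^ 2 ≤ 1 := by nlinarith [ht.1, ht.2]
    nlinarith [sq_nonneg a]
  have hqpow_le : ∀ t ∈ Icc (0:ℝ) 1, (q t) ^ ((p-2)/2) ≤ (a + b) ^ (p - 2) := by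
    intro t ht
    have h1 : (q t) ^ ((p-2)/2) ≤ ((a+b)^2) ^ ((p-2)/2) :=
      Real.rpow_le_rpow (hq0 t) (hqle t ht) (by linarith)
    have h2 : ((a+b)^2 : ℝ) ^ ((p-2)/2) = (a+b) ^ (p-2) := by
      rw [← Real.rpow_natCast (a+b) 2, ← Real.rpow_mul hab]
      rw [show (2:ℕ) * ((p-2)/2) = p - 2 by push_cast; ring]
    linarith [h1, h2.le, h2.ge]
  -- derivative of q
  have hqd : ∀ t : ℝ, HasDerivAt q (2 * a ^ 2 * t + 2 * c) t := by
    intro t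
    have h1 : HasDerivAt (fun t : ℝ => a ^ 2 * t ^ 2 + 2 * c * t + b ^ 2)
        (a ^ 2 * (2 * t) + 2 * c) t := by
      exact (((hasDerivAt_pow 2 t).const_mul (a^2)).add
        ((hasDerivAt_id t).const_mul (2*c))).add_const (b^2) |>.congr_deriv (by ring_nf)
    exact h1.congr_deriv (by ring)
  -- derivative of g
  have hgd : ∀ t : ℝ, HasDerivAt g (g1 t) t := by
    intro t
    have h1 : HasDerivAt (fun u : ℝ => u ^ (p/2)) (p/2 * (q t) ^ (p/2 - 1)) (q t) :=
      Real.hasDerivAt_rpow_const (Or.inr (by linarith))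
    have h2 := h1.comp t (hqd t)
    have h3 : p/2 * (q t) ^ (p/2 - 1) * (2 * a ^ 2 * t + 2 * c) = g1 t := by
      simp only [hg1def]
      rw [show p/2 - 1 = (p-2)/2 by ring]
      ring
    exact h3 ▸ h2
  have hM0 : 0 ≤ M := by
    rw [hMdef]
    exact mul_nonneg (mul_nonneg (mul_nonneg (by linarith) (by linarith))
      (Real.rpow_nonneg hab _)) (sq_nonneg a)
  -- derivative of g1 everywhere, with bound on [0,1]
  have hg1d : ∀ t : ℝ, ∃ D, HasDerivAt g1 D t ∧ (t ∈ Icc (0:ℝ) 1 → |D| ≤ M) := by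
    intro t
    rcases eq_or_lt_of_le (hq0 t) with hqz | hqpos
    · -- q t = 0 : double root, derivative is 0
      have hzc : a ^ 2 * t + c = 0 := by
        have h1 := hdisc t
        rw [← hqz] at h1
        nlinarith [sq_nonneg (a ^ 2 * t + c)]
      have hceq : c = -(a ^ 2) * t := by linarith
      have hbeq : b ^ 2 = a ^ 2 * t ^ 2 := by
        have h1 : q t = 0 := hqz.symm
        simp only [hqdef] at h1
        rw [hceq] at h1
        nlinarith
      have hqt : ∀ s, q s = a ^ 2 * (s - t) ^ 2 := by
        intro s
        simp only [hqdef]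
        rw [hceq]
        linear_combination hbeq
      have hg1t : g1 t = 0 := by
        simp only [hg1def, hzc, mul_zero]
      set φ : ℝ → ℝ := fun s => p * (a ^ 2 * (s - t) ^ 2) ^ ((p-2)/2) * a ^ 2 with hphidef
      have hphi : Tendsto φ (𝓝 t) (𝓝 0) := by
        have hin : Tendsto (fun s : ℝ => a ^ 2 * (s - t) ^ 2) (𝓝 t) (𝓝 0) := by
          have : Continuous (fun s : ℝ => a ^ 2 * (s - t) ^ 2) :=
            continuous_const.mul ((continuous_id.sub continuous_const).pow 2)
          have h0 : a ^ 2 * (t - t) ^ 2 = 0 := by ring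
          simpa [h0] using this.tendsto t
        have hrp : ContinuousAt (fun u : ℝ => u ^ ((p-2)/2)) 0 :=
          Real.continuousAt_rpow_const 0 _ (Or.inr (by linarith))
        have h2 : Tendsto (fun s : ℝ => (a ^ 2 * (s - t) ^ 2) ^ ((p-2)/2)) (𝓝 t)
            (𝓝 ((0:ℝ) ^ ((p-2)/2))) := hrp.tendsto.comp hin
        rw [Real.zero_rpow (ne_of_gt (by linarith : (0:ℝ) < (p-2)/2))] at h2
        have h3 := (h2.const_mul p).mul_const (a ^ 2)
        simpa using h3
      have hslope : Tendsto (slope g1 t) (𝓝[≠] t) (𝓝 0) := by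
        have heq : ∀ s ∈ ({t}ᶜ : Set ℝ), slope g1 t s = φ s := by
          intro s hs
          have hst : s - t ≠ 0 := sub_ne_zero.2 hs
          have hlin : a ^ 2 * s + c = a ^ 2 * (s - t) := by rw [hceq]; ring
          rw [slope_def_field, hg1t, sub_zero]
          simp only [hg1def, hphidef]
          rw [hqt s, hlin]
          field_simp
        have : slope g1 t =ᶠ[𝓝[≠] t] φ :=
          eventuallyEq_of_mem self_mem_nhdsWithin heq
        exact (hphi.mono_left nhdsWithin_le_nhds).congr' this.symm
      refine ⟨0, hasDerivAt_iff_tendsto_slope.2 hslope, fun _ => by simpa using hM0⟩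
    · -- q t > 0
      have h2 : HasDerivAt (fun s => (q s) ^ ((p-2)/2))
          ((p-2)/2 * (q t) ^ ((p-2)/2 - 1) * (2 * a ^ 2 * t + 2 * c)) t :=
        (Real.hasDerivAt_rpow_const (Or.inl (ne_of_gt hqpos))).comp t (hqd t)
      have h3 : HasDerivAt (fun s : ℝ => a ^ 2 * s + c) (a ^ 2) t := by
        simpa using ((hasDerivAt_id t).const_mul (a ^ 2)).add_const c
      have h4 := (h2.mul h3).const_mul p
      have h5 : g1 = fun s => p * ((q s) ^ ((p-2)/2) * (a ^ 2 * s + c)) := by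
        funext s; simp only [hg1def]; ring
      set D : ℝ := p * ((p-2)/2 * (q t) ^ ((p-2)/2 - 1) * (2 * a ^ 2 * t + 2 * c) * (a ^ 2 * t + c)
        + (q t) ^ ((p-2)/2) * a ^ 2) with hDdef
      have hD : HasDerivAt g1 D t := by
        rw [h5]
        exact h4
      refine ⟨D, hD, fun ht => ?_⟩
      -- rewrite D
      have hDeq : D = p * (p - 2) * (q t) ^ ((p-4)/2) * (a ^ 2 * t + c) ^ 2
          + p * (q t) ^ ((p-2)/2) * a ^ 2 := by
        rw [hDdef, show (p-2)/2 - 1 = (p-4)/2 by ring]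
        ring
      have hpow4 : (q t) ^ ((p-4)/2) * q t = (q t) ^ ((p-2)/2) := by
        nth_rewrite 2 [← Real.rpow_one (q t)]
        rw [← Real.rpow_add hqpos]
        congr 1
        ring
      have hDnn : 0 ≤ D := by
        rw [hDeq]
        have h9 : (0:ℝ) ≤ p * (p - 2) := mul_nonneg (by linarith) (by linarith)
        exact add_nonneg
          (mul_nonneg (mul_nonneg h9 (Real.rpow_nonneg (hq0 t) _)) (sq_nonneg _))
          (mul_nonneg (mul_nonneg (by linarith) (Real.rpow_nonneg (hq0 t) _)) (sq_nonneg a))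
      have hkey : (q t) ^ ((p-4)/2) * (a ^ 2 * t + c) ^ 2 ≤ a ^ 2 * (q t) ^ ((p-2)/2) := by
        calc (q t) ^ ((p-4)/2) * (a ^ 2 * t + c) ^ 2
            ≤ (q t) ^ ((p-4)/2) * (a ^ 2 * q t) :=
              mul_le_mul_of_nonneg_left (hdisc t) (Real.rpow_nonneg (hq0 t) _)
          _ = a ^ 2 * ((q t) ^ ((p-4)/2) * q t) := by ring
          _ = a ^ 2 * (q t) ^ ((p-2)/2) := by rw [hpow4]
      have hDle : D ≤ M := by
        have hq2 : (q t) ^ ((p-2)/2) ≤ (a+b) ^ (p-2) := hqpow_le t ht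
        have h6 : D ≤ p * (p-1) * a ^ 2 * (q t) ^ ((p-2)/2) := by
          have h8 := mul_le_mul_of_nonneg_left hkey
            (mul_nonneg (by linarith : (0:ℝ) ≤ p) (by linarith : (0:ℝ) ≤ p - 2))
          rw [hDeq]
          linarith [h8]
        have h7 : p * (p-1) * a ^ 2 * (q t) ^ ((p-2)/2) ≤ p * (p-1) * a ^ 2 * (a+b) ^ (p-2) := by
          exact mul_le_mul_of_nonneg_left hq2
            (mul_nonneg (mul_nonneg (by linarith) (by linarith)) (sq_nonneg a))
        rw [hMdef]
        linarith
      rw [abs_of_nonneg hDnn]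
      exact hDle
  -- mean value: g1 is M-Lipschitz-above on [0,1]
  choose D hD hDb using hg1d
  have hlip : ∀ t ∈ Icc (0:ℝ) 1, g1 t - g1 0 ≤ M * t := by
    intro t ht
    have h1 := Convex.norm_image_sub_le_of_norm_hasDerivWithin_le
      (f := g1) (f' := D) (s := Icc (0:ℝ) 1)
      (fun s hs => (hD s).hasDerivWithinAt)
      (fun s hs => by rw [Real.norm_eq_abs]; exact hDb s hs)
      (convex_Icc 0 1) (left_mem_Icc.2 zero_le_one) ht
    rw [Real.norm_eq_abs, Real.norm_eq_abs, sub_zero] at h1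
    calc g1 t - g1 0 ≤ |g1 t - g1 0| := le_abs_self _
      _ ≤ M * |t| := h1
      _ = M * t := by rw [abs_of_nonneg ht.1]
  -- the auxiliary function F
  set F : ℝ → ℝ := fun t => g t - g1 0 * t - M * t ^ 2 / 2 with hFdef
  have hFd : ∀ t : ℝ, HasDerivAt F (g1 t - g1 0 - M * t) t := by
    intro t
    have h1 : HasDerivAt (fun s : ℝ => g1 0 * s) (g1 0) t := by
      simpa using (hasDerivAt_id t).const_mul (g1 0)
    have h2 : HasDerivAt (fun s : ℝ => M * s ^ 2 / 2) (M * (2 * t ^ 1) / 2) t :=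
      ((hasDerivAt_pow 2 t).const_mul M).div_const 2
    have h3 := ((hgd t).sub h1).sub h2
    exact h3.congr_deriv (by ring)
  have hF10 : F 1 ≤ F 0 := by
    have hcont : ContinuousOn F (Icc 0 1) := fun t _ =>
      (hFd t).continuousAt.continuousWithinAt
    have hdiff : DifferentiableOn ℝ F (interior (Icc (0:ℝ) 1)) := fun t _ =>
      (hFd t).differentiableAt.differentiableWithinAt
    have hanti : AntitoneOn F (Icc (0:ℝ) 1) := by
      apply antitoneOn_of_deriv_nonpos (convex_Icc 0 1) hcont hdiff
      intro t ht
      rw [interior_Icc] at ht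
      rw [(hFd t).deriv]
      have := hlip t (Ioo_subset_Icc_self ht)
      have := mul_nonneg hM0 (le_of_lt ht.1)
      linarith
    exact hanti (left_mem_Icc.2 zero_le_one) (right_mem_Icc.2 zero_le_one) zero_le_one
  -- unfold F at 0 and 1
  have hmain : g 1 - g1 0 - g 0 ≤ M / 2 := by
    have h0 : F 0 = g 0 := by simp only [hFdef]; ring
    have h1 : F 1 = g 1 - g1 0 - M / 2 := by simp only [hFdef]; ring
    rw [h0, h1] at hF10
    linarith
  -- translate back
  have hb2p : ((b:ℝ) ^ 2) ^ (p/2) = b ^ p := by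
    rw [← Real.rpow_natCast b 2, ← Real.rpow_mul hb]
    rw [show (2:ℕ) * (p/2) = p by push_cast; ring]
  have hb2p2 : ((b:ℝ) ^ 2) ^ ((p-2)/2) = b ^ (p-2) := by
    rw [← Real.rpow_natCast b 2, ← Real.rpow_mul hb]
    rw [show (2:ℕ) * ((p-2)/2) = p - 2 by push_cast; ring]
  have hg1value : g 1 = (a ^ 2 + 2 * c + b ^ 2) ^ (p/2) := by
    simp only [hgdef, hqdef]; norm_num
  have hg0value : g 0 = b ^ p := by
    simp only [hgdef, hqdef]; norm_num [hb2p]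
  have hg10value : g1 0 = p * b ^ (p-2) * c := by
    simp only [hg1def, hqdef]; norm_num [hb2p2]
  rw [hg1value, hg0value, hg10value] at hmain
  rw [hMdef] at hmain
  linarith

/-- Shafrir's pointwise vector inequality: for `p ≥ 2` and all
`x, y ∈ ℝ^N`, `|x+y|^p - p|y|^{p-2}(y·x) - |y|^p ≤ (p(p-1)/2)(|x|+|y|)^{p-2}|x|²`. -/
theorem shafrir_inequality (N : ℕ) (p : ℝ) (hp : 2 ≤ p)
    (x y : EuclideanSpace ℝ (Fin N)) :
    ‖x + y‖ ^ p - p * ‖y‖ ^ (p - 2) * (inner ℝ y x : ℝ) - ‖y‖ ^ p ≤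
      p * (p - 1) / 2 * (‖x‖ + ‖y‖) ^ (p - 2) * ‖x‖ ^ 2 := by
  have hxy2 : ‖x + y‖ ^ 2 = ‖x‖ ^ 2 + 2 * (inner ℝ y x : ℝ) + ‖y‖ ^ 2 := by
    rw [norm_add_sq_real, real_inner_comm]
  rcases eq_or_lt_of_le hp with hp2 | hp2
  · -- p = 2
    subst hp2
    rw [show ((2:ℝ) - 2) = 0 by norm_num, Real.rpow_zero, Real.rpow_zero,
      Real.rpow_two, Real.rpow_two, hxy2]
    nlinarith [sq_nonneg ‖x‖]
  · -- p > 2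
    by_cases hx : x = 0
    · subst hx
      simp only [inner_zero_right, norm_zero, mul_zero, zero_add, zero_sub, sub_zero]
      norm_num
    · have ha : 0 < ‖x‖ := norm_pos_iff.2 hx
      have hc : (inner ℝ y x : ℝ) ^ 2 ≤ ‖x‖ ^ 2 * ‖y‖ ^ 2 := by
        have := abs_real_inner_le_norm y x
        nlinarith [abs_nonneg (inner ℝ y x : ℝ), le_abs_self (inner ℝ y x : ℝ),
          neg_abs_le (inner ℝ y x : ℝ)]
      have hkey := shafrir_key p ‖x‖ ‖y‖ (inner ℝ y x : ℝ) hp2 ha (norm_nonneg y) hc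
      have hxyp : ‖x + y‖ ^ p = (‖x‖ ^ 2 + 2 * (inner ℝ y x : ℝ) + ‖y‖ ^ 2) ^ (p / 2) := by
        rw [← hxy2, ← Real.rpow_natCast ‖x + y‖ 2, ← Real.rpow_mul (norm_nonneg _)]
        rw [show (2:ℕ) * (p/2) = p by push_cast; ring]
      rw [hxyp]
      linarith
end

section
/- Let N ≥ 3 and 2 < p < N, and let a₁, a₂ ∈ ℝ^N be distinct points with midpoint a = (a₁+a₂)/2. For every δ > 0 there exists r₀ > 0 such that for every i ∈ {1,2} and every x ∈ B(a_i, r₀) \ {a_i} one has μ₂ V₂(x) − (δ/2) V₁(x) < 0. -/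
open MeasureTheory

private lemma inner_sq_bound {N : ℕ} (u v : EuclideanSpace ℝ (Fin N)) :
    ‖u‖ ^ 2 * ‖u + v‖ ^ 2 - (inner ℝ u (u + v) : ℝ) ^ 2 ≤ ‖u‖ ^ 2 * ‖v‖ ^ 2 := by
  have h1 : ‖u + v‖ ^ 2 = ‖u‖ ^ 2 + 2 * (inner ℝ u v : ℝ) + ‖v‖ ^ 2 := norm_add_sq_real u v
  have h2 : (inner ℝ u (u + v) : ℝ) = ‖u‖ ^ 2 + (inner ℝ u v : ℝ) := by
    rw [inner_add_right, real_inner_self_eq_norm_sq]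
  nlinarith [sq_nonneg ((inner ℝ u v : ℝ))]

private lemma V₁_symm {N : ℕ} (p : ℝ) (a₁ a₂ x : EuclideanSpace ℝ (Fin N)) :
    V₁ p a₂ a₁ x = V₁ p a₁ a₂ x := by
  unfold V₁ midpt
  rw [norm_sub_rev a₂ a₁, add_comm a₂ a₁, mul_comm (‖x - a₂‖ ^ p) (‖x - a₁‖ ^ p)]

private lemma V₂_symm {N : ℕ} (p : ℝ) (a₁ a₂ x : EuclideanSpace ℝ (Fin N)) :
    V₂ p a₂ a₁ x = V₂ p a₁ a₂ x := by
  unfold V₂ midpt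
  rw [add_comm a₂ a₁, mul_comm (‖x - a₂‖ ^ p) (‖x - a₁‖ ^ p),
    real_inner_comm (x - a₂) (x - a₁), mul_comm (‖x - a₂‖ ^ 2) (‖x - a₁‖ ^ 2)]

private lemma key_pole {N : ℕ} (p : ℝ) (a₁ a₂ : EuclideanSpace ℝ (Fin N)) (hne : a₁ ≠ a₂)
    (δ : ℝ) (hδ : 0 < δ) (hμ : 0 < μ₂ N p) :
    ∃ r₀ : ℝ, 0 < r₀ ∧ ∀ x ∈ Metric.ball a₁ r₀ \ {a₁},
      μ₂ N p * V₂ p a₁ a₂ x - δ / 2 * V₁ p a₁ a₂ x < 0 := by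
  set μ := μ₂ N p with hμdef
  set d : ℝ := ‖a₁ - a₂‖ with hd_def
  have hd : 0 < d := norm_pos_iff.mpr (sub_ne_zero.mpr hne)
  have hs : 0 < Real.sqrt (δ / (64 * μ)) := Real.sqrt_pos.mpr (by positivity)
  refine ⟨min (d / 4) (d * Real.sqrt (δ / (64 * μ))), by positivity, ?_⟩
  intro x hx
  obtain ⟨hxb, hxne⟩ := hx
  rw [Metric.mem_ball, dist_eq_norm] at hxb
  have hxne' : x ≠ a₁ := hxne
  have h1 : 0 < ‖x - a₁‖ := norm_pos_iff.mpr (sub_ne_zero.mpr hxne')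
  have h1a : ‖x - a₁‖ < d / 4 := lt_of_lt_of_le hxb (min_le_left _ _)
  have h1b : ‖x - a₁‖ < d * Real.sqrt (δ / (64 * μ)) := lt_of_lt_of_le hxb (min_le_right _ _)
  have h2 : 3 * d / 4 < ‖x - a₂‖ := by
    have ht : d ≤ ‖x - a₁‖ + ‖x - a₂‖ := by
      calc d = ‖(a₁ - x) + (x - a₂)‖ := by rw [sub_add_sub_cancel]
        _ ≤ ‖a₁ - x‖ + ‖x - a₂‖ := norm_add_le _ _
        _ = ‖x - a₁‖ + ‖x - a₂‖ := by rw [norm_sub_rev]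
    linarith
  have h2' : 0 < ‖x - a₂‖ := by linarith
  have hma : ‖a₁ - midpt a₁ a₂‖ = d / 2 := by
    have he : a₁ - midpt a₁ a₂ = (2⁻¹ : ℝ) • (a₁ - a₂) := by
      unfold midpt; module
    rw [he, norm_smul, Real.norm_eq_abs, abs_of_pos (by norm_num : (0:ℝ) < 2⁻¹), ← hd_def]
    ring
  have hM : d / 4 < ‖x - midpt a₁ a₂‖ := by
    have ht : d / 2 ≤ ‖x - a₁‖ + ‖x - midpt a₁ a₂‖ := by
      calc d / 2 = ‖(a₁ - x) + (x - midpt a₁ a₂)‖ := by rw [sub_add_sub_cancel, hma]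
        _ ≤ ‖a₁ - x‖ + ‖x - midpt a₁ a₂‖ := norm_add_le _ _
        _ = ‖x - a₁‖ + ‖x - midpt a₁ a₂‖ := by rw [norm_sub_rev]
    linarith
  set M : ℝ := ‖x - midpt a₁ a₂‖ with hM_def
  have hM0 : 0 < M := lt_trans (by positivity) hM
  have hD : 0 < ‖x - a₁‖ ^ p * ‖x - a₂‖ ^ p :=
    mul_pos (Real.rpow_pos_of_pos h1 p) (Real.rpow_pos_of_pos h2' p)
  have hMp : 0 < M ^ (p - 4) := Real.rpow_pos_of_pos hM0 _
  -- bound the bracket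
  have hstuff : ‖x - a₁‖ ^ 2 * ‖x - a₂‖ ^ 2 - (inner ℝ (x - a₁) (x - a₂) : ℝ) ^ 2
      ≤ ‖x - a₁‖ ^ 2 * d ^ 2 := by
    have h := inner_sq_bound (x - a₁) (a₁ - a₂)
    rw [sub_add_sub_cancel] at h
    exact h
  -- key numeric inequality
  have key1 : μ * ‖x - a₁‖ ^ 2 < δ / 2 * M ^ 2 := by
    have e1 : ‖x - a₁‖ ^ 2 < (d * Real.sqrt (δ / (64 * μ))) ^ 2 :=
      pow_lt_pow_left₀ h1b (norm_nonneg _) (by norm_num)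
    have e2 : (d * Real.sqrt (δ / (64 * μ))) ^ 2 = d ^ 2 * (δ / (64 * μ)) := by
      rw [mul_pow, Real.sq_sqrt (by positivity)]
    have e3 : μ * ‖x - a₁‖ ^ 2 < δ * d ^ 2 / 64 := by
      have := mul_lt_mul_of_pos_left e1 hμ
      rw [e2] at this
      calc μ * ‖x - a₁‖ ^ 2 < μ * (d ^ 2 * (δ / (64 * μ))) := this
        _ = δ * d ^ 2 / 64 := by field_simp
    have e4 : δ / 2 * (d / 4) ^ 2 ≤ δ / 2 * M ^ 2 := by
      have : (d / 4) ^ 2 ≤ M ^ 2 := pow_le_pow_left₀ (by positivity) hM.le 2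
      nlinarith
    nlinarith
  have hMsplit : M ^ (p - 2) = M ^ (p - 4) * M ^ 2 := by
    rw [show p - 2 = (p - 4) + 2 by ring, Real.rpow_add hM0]
    norm_num [Real.rpow_two]
  rw [sub_neg]
  unfold V₂ V₁
  rw [← hM_def, ← hd_def]
  calc μ * (M ^ (p - 4) / (‖x - a₁‖ ^ p * ‖x - a₂‖ ^ p) *
        (‖x - a₁‖ ^ 2 * ‖x - a₂‖ ^ 2 - (inner ℝ (x - a₁) (x - a₂) : ℝ) ^ 2))
      ≤ μ * (M ^ (p - 4) / (‖x - a₁‖ ^ p * ‖x - a₂‖ ^ p) * (‖x - a₁‖ ^ 2 * d ^ 2)) := by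
        apply mul_le_mul_of_nonneg_left _ hμ.le
        exact mul_le_mul_of_nonneg_left hstuff (by positivity)
    _ = (M ^ (p - 4) * d ^ 2 / (‖x - a₁‖ ^ p * ‖x - a₂‖ ^ p)) * (μ * ‖x - a₁‖ ^ 2) := by
        ring
    _ < (M ^ (p - 4) * d ^ 2 / (‖x - a₁‖ ^ p * ‖x - a₂‖ ^ p)) * (δ / 2 * M ^ 2) := by
        apply mul_lt_mul_of_pos_left key1
        exact div_pos (by positivity) hD
    _ = δ / 2 * (d ^ 2 * (M ^ (p - 4) * M ^ 2) / (‖x - a₁‖ ^ p * ‖x - a₂‖ ^ p)) := by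
        ring
    _ = δ / 2 * (d ^ 2 * M ^ (p - 2) / (‖x - a₁‖ ^ p * ‖x - a₂‖ ^ p)) := by
        rw [hMsplit]

/-- near each pole, `μ₂ V₂` is dominated by any small multiple of `V₁`:
for every `δ > 0` there is `r₀ > 0` such that `μ₂ V₂(x) - (δ/2) V₁(x) < 0` for all
`x ∈ B(a_i, r₀) \ {a_i}`, `i = 1, 2`. -/
theorem V2_dominated_by_V1_near_poles (N : ℕ) (hN : 3 ≤ N) (p : ℝ) (hp : 2 < p)
    (hpN : p < N) (a₁ a₂ : EuclideanSpace ℝ (Fin N)) (hne : a₁ ≠ a₂)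
    (δ : ℝ) (hδ : 0 < δ) :
    ∃ r₀ : ℝ, 0 < r₀ ∧ ∀ aᵢ ∈ ({a₁, a₂} : Set (EuclideanSpace ℝ (Fin N))),
      ∀ x ∈ Metric.ball aᵢ r₀ \ {aᵢ},
        μ₂ N p * V₂ p a₁ a₂ x - δ / 2 * V₁ p a₁ a₂ x < 0 := by
  have hμ : 0 < μ₂ N p := by
    unfold μ₂
    have h1 : (0:ℝ) < (N - p) / (p - 1) := div_pos (by linarith) (by linarith)
    exact mul_pos (by linarith) (Real.rpow_pos_of_pos h1 _)
  obtain ⟨r₁, hr₁, H₁⟩ := key_pole p a₁ a₂ hne δ hδ hμ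
  obtain ⟨r₂, hr₂, H₂'⟩ := key_pole p a₂ a₁ hne.symm δ hδ hμ
  have H₂ : ∀ x ∈ Metric.ball a₂ r₂ \ {a₂},
      μ₂ N p * V₂ p a₁ a₂ x - δ / 2 * V₁ p a₁ a₂ x < 0 := by
    intro x hx
    rw [← V₁_symm, ← V₂_symm]
    exact H₂' x hx
  refine ⟨min r₁ r₂, lt_min hr₁ hr₂, ?_⟩
  intro aᵢ hai
  simp only [Set.mem_insert_iff, Set.mem_singleton_iff] at hai
  rcases hai with rfl | rfl
  · intro x hx
    exact H₁ x ⟨Metric.ball_subset_ball (min_le_left _ _) hx.1, hx.2⟩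
  · intro x hx
    exact H₂ x ⟨Metric.ball_subset_ball (min_le_right _ _) hx.1, hx.2⟩
end
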